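/- arXiv:1904.09487 — 2 statements merged into one kernel-verified Lean document; each statement's English description precedes it below -/
import Mathlib

section
/- Let G_σ be a connected signed simple graph with s vertices, let K be a field of characteristic ≠ 2, and let 𝕏 ⊆ P^{s−1}(K) be the set of projective points given by the columns of the incidence matrix of G_σ. Then the frustration index φ(G_σ) equals min{|𝕏 \ V_𝕏(h)|} over all linear forms h = a₁t₁ + ⋯ + a_s t_s with each a_i ∈ {1, −1}, where V_𝕏(h) is the set of points of 𝕏 at which h vanishes. -/
/-!
A switching function `b : V → ZMod 2`, equivalently the sign vector `a = (-1)^b`, makes an edge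
`{u, v}` negative exactly when `b u + b v` differs from its sign bit; call such edges frustrated.
When `char K ≠ 2`, the form `∑ a_i t_i` vanishes at the column of an edge iff the edge is not
frustrated, and distinct edges of a simple loopless graph give distinct points, so the right-hand
side is the least number of frustrated edges of a switching.
Deleting the frustrated edges of a switching leaves a balanced graph, because modulo 2 the number
of negative edges of a cycle equals its number of frustrated edges (every vertex of a cycle has
even degree). Conversely, by Harary's theorem, the edges left after deleting a balancing set can be
switched to be all positive, so every balancing set contains the frustrated edges of a switching.
-/

open Classical Set

structure SignedGraph (V E : Type*) where
  ends : E → V × V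
  sign : E → Bool

namespace SignedGraph

variable {V E : Type*} (G : SignedGraph V E)

def touches (e : E) (v : V) : Prop := (G.ends e).1 = v ∨ (G.ends e).2 = v

def verts (X : Set E) : Set V := {v | ∃ e ∈ X, G.touches e v}

noncomputable def deg (X : Set E) (v : V) : ℕ :=
  ∑ᶠ e ∈ X, ((if (G.ends e).1 = v then 1 else 0) + (if (G.ends e).2 = v then 1 else 0))

def adjIn (X : Set E) (u v : V) : Prop :=
  ∃ e ∈ X, G.ends e = (u, v) ∨ G.ends e = (v, u)

def ConnSet (X : Set E) : Prop :=
  ∀ u ∈ G.verts X, ∀ v ∈ G.verts X, Relation.EqvGen (G.adjIn X) u v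

def IsCycle (C : Set E) : Prop :=
  C.Nonempty ∧ G.ConnSet C ∧ ∀ v ∈ G.verts C, G.deg C v = 2

noncomputable def negCount (C : Set E) : ℕ := {e ∈ C | G.sign e = false}.ncard

def IsBalancedCycle (C : Set E) : Prop := G.IsCycle C ∧ Even (G.negCount C)

def IsUnbalancedCycle (C : Set E) : Prop := G.IsCycle C ∧ ¬ Even (G.negCount C)

def IsPath (P : Set E) : Prop :=
  P.Nonempty ∧ G.ConnSet P ∧ (∀ e ∈ P, (G.ends e).1 ≠ (G.ends e).2) ∧
    (∀ v ∈ G.verts P, G.deg P v ≤ 2) ∧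
    {v ∈ G.verts P | G.deg P v = 1}.ncard = 2

def IsBowtie (B : Set E) : Prop :=
  (∃ C₁ C₂, G.IsUnbalancedCycle C₁ ∧ G.IsUnbalancedCycle C₂ ∧ B = C₁ ∪ C₂ ∧
      ∃ v, G.verts C₁ ∩ G.verts C₂ = {v}) ∨
  (∃ C₁ C₂ P, G.IsUnbalancedCycle C₁ ∧ G.IsUnbalancedCycle C₂ ∧ G.IsPath P ∧
      Disjoint (G.verts C₁) (G.verts C₂) ∧ B = C₁ ∪ C₂ ∪ P ∧
      (∃ v₁, G.verts P ∩ G.verts C₁ = {v₁} ∧ G.deg P v₁ = 1) ∧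
      (∃ v₂, G.verts P ∩ G.verts C₂ = {v₂} ∧ G.deg P v₂ = 1) ∧
      Disjoint P C₁ ∧ Disjoint P C₂)

def comp (X : Set E) (v : V) : Set V := {w | Relation.EqvGen (G.adjIn X) v w}

noncomputable def numComponents (X : Set E) : ℕ := {K | ∃ v, K = G.comp X v}.ncard

def BalancedComponent (X : Set E) (K : Set V) : Prop :=
  (∃ v, K = G.comp X v) ∧ ∀ C ⊆ X, G.verts C ⊆ K → G.IsCycle C → Even (G.negCount C)

noncomputable def numBalancedComponents (X : Set E) : ℕ := {K | G.BalancedComponent X K}.ncard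

def Balanced : Prop := ∀ C, G.IsCycle C → Even (G.negCount C)

def Connected : Prop := ∀ u v : V, Relation.EqvGen (G.adjIn Set.univ) u v

noncomputable def incCol (K : Type*) [Field K] (e : E) : V → K := fun v =>
  (if (G.ends e).1 = v then 1 else 0) +
    (if (G.ends e).2 = v then (if G.sign e then -1 else 1) else 0)

noncomputable def incMatrix (K : Type*) [Field K] : Matrix V E K := fun v e => G.incCol K e v

noncomputable def code (K : Type*) [Field K] : Submodule K (E → K) :=
  Submodule.span K (Set.range fun v => fun e => G.incCol K e v)

end SignedGraph

noncomputable def codeSupport {ι F : Type*} [Field F] (D : Submodule F (ι → F)) : Set ι :=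
  {i | ∃ v ∈ D, v i ≠ 0}

noncomputable def GHW {ι F : Type*} [Field F] (C : Submodule F (ι → F)) (r : ℕ) : ℕ :=
  sInf {n | ∃ D : Submodule F (ι → F), D ≤ C ∧ Module.finrank F D = r ∧ (codeSupport D).ncard = n}

noncomputable def dotL {ι F : Type*} [Fintype ι] [Field F] (v : ι → F) : (ι → F) →ₗ[F] F where
  toFun w := ∑ i, v i * w i
  map_add' a b := by simp [mul_add, Finset.sum_add_distrib]
  map_smul' c a := by simp [Finset.mul_sum, mul_left_comm, smul_eq_mul]

noncomputable def dualCode {ι F : Type*} [Fintype ι] [Field F]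
    (C : Submodule F (ι → F)) : Submodule F (ι → F) :=
  ⨅ v ∈ C, LinearMap.ker (dotL v)

def NonRedundant {α : Type*} {r : ℕ} (C : Fin r → Set α) : Prop :=
  ∀ j, (⋃ i, ⋃ (_ : i ≠ j), C i) ⊂ ⋃ i, C i

/-- The set of projective points defined by the columns of the incidence matrix. -/
noncomputable def projPoints {V E : Type*} (G : SignedGraph V E) (K : Type*) [Field K] :
    Set (Projectivization K (V → K)) :=
  {p | ∃ (e : E) (h : G.incCol K e ≠ 0), p = Projectivization.mk K (G.incCol K e) h}

/-- The linear form with coefficients `a` vanishes at the projective point `p`. -/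
def vanishesAt {V K : Type*} [Fintype V] [Field K] (a : V → K)
    (p : Projectivization K (V → K)) : Prop :=
  ∀ (w : V → K) (hw : w ≠ 0), p = Projectivization.mk K w hw → ∑ v, a v * w v = 0

/-- The frustration index: the least number of edges whose deletion leaves a
balanced signed graph. -/
noncomputable def frustrationIndex {V E : Type*} (G : SignedGraph V E) : ℕ :=
  sInf {n | ∃ X : Set E,
    (∀ C ⊆ Set.univ \ X, G.IsCycle C → Even (G.negCount C)) ∧ X.ncard = n}

namespace SignedGraph

variable {V E : Type*} (G : SignedGraph V E)

/-- `1` for a negative edge (`sign = false`). -/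
def signBit (e : E) : ZMod 2 := if G.sign e then 0 else 1

/-- The edges left negative after switching the signs at the vertices where `b = 1`. -/
def frustratedEdges (b : V → ZMod 2) : Set E :=
  {e | b (G.ends e).1 + b (G.ends e).2 ≠ G.signBit e}

noncomputable def edgeDeg (e : E) (w : V) : ℕ :=
  (if (G.ends e).1 = w then 1 else 0) + (if (G.ends e).2 = w then 1 else 0)

variable {G}

lemma deg_coe_finset (s : Finset E) (w : V) : G.deg ↑s w = ∑ f ∈ s, G.edgeDeg f w := by
  rw [deg, finsum_mem_coe_finset]
  rfl

lemma deg_eq_zero_of_notMem_verts {C : Set E} {w : V} (hw : w ∉ G.verts C) : G.deg C w = 0 := by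
  refine finsum_mem_eq_zero_of_forall_eq_zero fun f hf => ?_
  have h₁ : (G.ends f).1 ≠ w := fun h => hw ⟨f, hf, Or.inl h⟩
  have h₂ : (G.ends f).2 ≠ w := fun h => hw ⟨f, hf, Or.inr h⟩
  simp [h₁, h₂]

lemma IsCycle.even_deg {C : Set E} (hC : G.IsCycle C) (w : V) : Even (G.deg C w) := by
  by_cases hw : w ∈ G.verts C
  · rw [hC.2.2 w hw]
    exact even_two
  · rw [deg_eq_zero_of_notMem_verts hw]
    exact .zero

lemma signBit_eq (b : V → ZMod 2) (e : E) :
    G.signBit e = b (G.ends e).1 + b (G.ends e).2 + if e ∈ G.frustratedEdges b then 1 else 0 := by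
  by_cases h : e ∈ G.frustratedEdges b
  · rw [if_pos h]
    have key : ∀ x y : ZMod 2, x ≠ y → y = x + 1 := by decide
    exact key _ _ h
  · rw [if_neg h, add_zero]
    exact (not_not.1 h).symm

lemma sum_ends_eq_zero [Fintype V] (b : V → ZMod 2) {s : Finset E}
    (hs : ∀ w, Even (G.deg ↑s w)) : ∑ f ∈ s, (b (G.ends f).1 + b (G.ends f).2) = 0 := by
  have hf : ∀ f, b (G.ends f).1 + b (G.ends f).2 = ∑ w, b w * (G.edgeDeg f w : ZMod 2) := by
    intro f
    simp [edgeDeg, mul_add, Finset.sum_add_distrib]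
  rw [Finset.sum_congr rfl fun f _ => hf f, Finset.sum_comm]
  refine Finset.sum_eq_zero fun w _ => ?_
  rw [← Finset.mul_sum, ← Nat.cast_sum, ← deg_coe_finset,
    ZMod.natCast_eq_zero_iff_even.2 (hs w), mul_zero]

lemma negCount_eq_ncard_inter_frustratedEdges [Fintype V] (b : V → ZMod 2) {C : Set E}
    (hC : C.Finite) (hdeg : ∀ w, Even (G.deg C w)) :
    (G.negCount C : ZMod 2) = ((C ∩ G.frustratedEdges b).ncard : ZMod 2) := by
  obtain ⟨s, rfl⟩ := hC.exists_finset_coe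
  have hneg :
      {e ∈ (↑s : Set E) | G.sign e = false} = ↑(s.filter fun e => G.sign e = false) := by
    ext; simp
  have hfr :
      (↑s : Set E) ∩ G.frustratedEdges b = ↑(s.filter (· ∈ G.frustratedEdges b)) := by
    ext; simp
  rw [negCount, hneg, hfr, Set.ncard_coe_finset, Set.ncard_coe_finset]
  calc ((s.filter fun e => G.sign e = false).card : ZMod 2)
      = ∑ f ∈ s, G.signBit f := by
        rw [Finset.natCast_card_filter]
        refine Finset.sum_congr rfl fun f _ => ?_
        rcases h : G.sign f <;> simp [signBit, h]
    _ = ∑ f ∈ s, (b (G.ends f).1 + b (G.ends f).2) +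
          ∑ f ∈ s, if f ∈ G.frustratedEdges b then 1 else 0 := by
        rw [← Finset.sum_add_distrib]
        exact Finset.sum_congr rfl fun f _ => signBit_eq b f
    _ = _ := by rw [sum_ends_eq_zero b hdeg, zero_add, Finset.natCast_card_filter]

lemma IsCycle.even_negCount_of_disjoint [Fintype V] [Finite E] {b : V → ZMod 2} {C : Set E}
    (hC : G.IsCycle C) (hCb : Disjoint C (G.frustratedEdges b)) : Even (G.negCount C) := by
  rw [← ZMod.natCast_eq_zero_iff_even,
    negCount_eq_ncard_inter_frustratedEdges b C.toFinite hC.even_deg, hCb.inter_eq, Set.ncard_empty,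
    Nat.cast_zero]

section Walk

variable (G) in
def Links (e : E) (u v : V) : Prop := G.ends e = (u, v) ∨ G.ends e = (v, u)

variable (G) in
/-- A walk from `u` to `v` along edges of `Y`, recorded as the list of (edge, vertex reached). -/
def IsWalk (Y : Set E) : V → List (E × V) → V → Prop
  | u, [], v => u = v
  | u, p :: l, v => p.1 ∈ Y ∧ G.Links p.1 u p.2 ∧ IsWalk Y p.2 l v

variable {Y : Set E} {u v : V} {l : List (E × V)}

lemma Links.symm {e : E} (h : G.Links e u v) : G.Links e v u := Or.symm h

lemma isWalk_append_iff {m : List (E × V)} :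
    G.IsWalk Y u (l ++ m) v ↔ ∃ x, G.IsWalk Y u l x ∧ G.IsWalk Y x m v := by
  induction l generalizing u with
  | nil => simp [IsWalk]
  | cons p l ih =>
    simp only [List.cons_append, IsWalk, ih]
    exact ⟨fun ⟨h₁, h₂, x, h₃, h₄⟩ => ⟨x, ⟨h₁, h₂, h₃⟩, h₄⟩,
      fun ⟨x, ⟨h₁, h₂, h₃⟩, h₄⟩ => ⟨h₁, h₂, x, h₃, h₄⟩⟩

lemma IsWalk.mono {Z : Set E} (h : G.IsWalk Y u l v) (hYZ : Y ⊆ Z) : G.IsWalk Z u l v := by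
  induction l generalizing u with
  | nil => exact h
  | cons p l ih => exact ⟨hYZ h.1, h.2.1, ih h.2.2⟩

lemma IsWalk.reverse (h : G.IsWalk Y u l v) : ∃ l', G.IsWalk Y v l' u := by
  induction l generalizing u with
  | nil => exact ⟨[], h.symm⟩
  | cons p l ih =>
    obtain ⟨l', hl'⟩ := ih h.2.2
    exact ⟨l' ++ [(p.1, u)], isWalk_append_iff.2 ⟨p.2, hl', h.1, h.2.1.symm, rfl⟩⟩

lemma exists_isWalk_of_eqvGen (h : Relation.EqvGen (G.adjIn Y) u v) : ∃ l, G.IsWalk Y u l v := by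
  induction h with
  | rel x y hxy =>
    obtain ⟨e, he, hl⟩ := hxy
    exact ⟨[(e, y)], he, hl, rfl⟩
  | refl x => exact ⟨[], rfl⟩
  | symm x y _ ih =>
    obtain ⟨l, hl⟩ := ih
    exact hl.reverse
  | trans x y z _ _ ih₁ ih₂ =>
    obtain ⟨l, hl⟩ := ih₁
    obtain ⟨m, hm⟩ := ih₂
    exact ⟨l ++ m, isWalk_append_iff.2 ⟨y, hl, hm⟩⟩

lemma IsWalk.edge_mem (h : G.IsWalk Y u l v) {f : E} (hf : f ∈ l.map Prod.fst) : f ∈ Y := by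
  induction l generalizing u with
  | nil => simp at hf
  | cons p l ih =>
    rcases List.mem_cons.1 hf with rfl | hf
    · exact h.1
    · exact ih h.2.2 hf

lemma IsWalk.end_mem (h : G.IsWalk Y u l v) (hl : l ≠ []) : v ∈ l.map Prod.snd := by
  induction l generalizing u with
  | nil => exact absurd rfl hl
  | cons p l ih =>
    rcases l with _ | ⟨q, l⟩
    · simp [show p.2 = v from h.2.2]
    · exact List.mem_cons_of_mem _ (ih h.2.2 (List.cons_ne_nil _ _))

lemma IsWalk.mem_of_touches (h : G.IsWalk Y u l v) {f : E} (hf : f ∈ l.map Prod.fst) {w : V}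
    (hw : G.touches f w) : w ∈ u :: l.map Prod.snd := by
  induction l generalizing u with
  | nil => simp at hf
  | cons p l ih =>
    rcases List.mem_cons.1 hf with rfl | hf
    · rcases h.2.1 with h' | h' <;> rcases hw with rfl | rfl <;> simp [h']
    · exact List.mem_cons_of_mem _ (ih h.2.2 hf)

lemma IsWalk.eqvGen {Z : Set E} (h : G.IsWalk Y u l v) (hZ : ∀ f ∈ l.map Prod.fst, f ∈ Z)
    {w : V} (hw : w ∈ u :: l.map Prod.snd) : Relation.EqvGen (G.adjIn Z) u w := by
  induction l generalizing u with
  | nil =>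
    rw [List.map_nil, List.mem_singleton] at hw
    subst hw
    exact .refl w
  | cons p l ih =>
    rcases List.mem_cons.1 hw with rfl | hw
    · exact .refl w
    · have hstep : G.adjIn Z u p.2 := ⟨p.1, hZ p.1 List.mem_cons_self, h.2.1⟩
      exact .trans _ _ _ (.rel _ _ hstep)
        (ih h.2.2 (fun f hf => hZ f (List.mem_cons_of_mem _ hf)) hw)

lemma IsWalk.exists_nodup (h : G.IsWalk Y u l v) :
    ∃ l', G.IsWalk Y u l' v ∧ (u :: l'.map Prod.snd).Nodup := by
  induction l generalizing u with
  | nil => exact ⟨[], h, List.nodup_singleton u⟩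
  | cons p l ih =>
    obtain ⟨l', hl', hnd⟩ := ih h.2.2
    by_cases hu : u ∈ p.2 :: l'.map Prod.snd
    · -- restart the walk from the visit of `u` in the shortened tail
      rcases List.mem_cons.1 hu with rfl | hu
      · exact ⟨l', hl', hnd⟩
      obtain ⟨q, hq, rfl⟩ := List.mem_map.1 hu
      obtain ⟨s, t, rfl⟩ := List.append_of_mem hq
      obtain ⟨x, hx, ht⟩ := (isWalk_append_iff (l := s ++ [q])).1 (by simpa using hl')
      obtain ⟨y, -, hq⟩ := isWalk_append_iff.1 hx
      obtain rfl : q.2 = x := hq.2.2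
      refine ⟨t, ht, hnd.sublist ?_⟩
      simp
    · exact ⟨p :: l', ⟨h.1, h.2.1, hl'⟩, List.nodup_cons.2 ⟨hu, hnd⟩⟩

lemma IsWalk.nodup_edges (h : G.IsWalk Y u l v) (hnd : (u :: l.map Prod.snd).Nodup) :
    (l.map Prod.fst).Nodup := by
  induction l generalizing u with
  | nil => exact List.nodup_nil
  | cons p l ih =>
    rw [List.map_cons, List.nodup_cons] at hnd ⊢
    refine ⟨fun hp => hnd.1 (h.2.2.mem_of_touches hp ?_), ih h.2.2 hnd.2⟩
    rcases h.2.1 with h' | h' <;> simp [touches, h']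

lemma IsWalk.sum_edgeDeg_add (h : G.IsWalk Y u l v) (w : V) :
    (l.map fun p => G.edgeDeg p.1 w).sum + (if v = w then 1 else 0) =
      (u :: l.map Prod.snd).count w + (l.map Prod.snd).count w := by
  induction l generalizing u with
  | nil =>
    obtain rfl : u = v := h
    simp [List.count_cons]
  | cons p l ih =>
    have hp : G.edgeDeg p.1 w = (if u = w then 1 else 0) + (if p.2 = w then 1 else 0) := by
      rcases h.2.1 with h' | h' <;> simp [edgeDeg, h', add_comm]
    have := ih h.2.2
    simp only [List.map_cons, List.sum_cons, List.count_cons, beq_iff_eq, hp] at this ⊢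
    omega

lemma IsWalk.isCycle (h : G.IsWalk Y u l u) (hl : l ≠ []) (hV : (l.map Prod.snd).Nodup)
    (hE : (l.map Prod.fst).Nodup) : G.IsCycle {f | f ∈ l.map Prod.fst} := by
  have hdeg : ∀ w, G.deg {f | f ∈ l.map Prod.fst} w = 2 * (l.map Prod.snd).count w := by
    intro w
    have := h.sum_edgeDeg_add w
    rw [← List.coe_toFinset, deg_coe_finset, List.sum_toFinset _ hE, List.map_map]
    simp only [List.count_cons, beq_iff_eq] at this
    simp only [Function.comp_def]
    omega
  have hverts : ∀ w ∈ G.verts {f | f ∈ l.map Prod.fst}, w ∈ l.map Prod.snd := by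
    rintro w ⟨f, hf, hfw⟩
    rcases List.mem_cons.1 (h.mem_of_touches hf hfw) with rfl | hw
    · exact h.end_mem hl
    · exact hw
  obtain ⟨p, hp⟩ := List.exists_mem_of_ne_nil l hl
  refine ⟨⟨p.1, List.mem_map_of_mem hp⟩, fun w₁ hw₁ w₂ hw₂ => ?_, fun w hw => ?_⟩
  · have hconn : ∀ w ∈ G.verts {f | f ∈ l.map Prod.fst},
        Relation.EqvGen (G.adjIn {f | f ∈ l.map Prod.fst}) u w :=
      fun w hw => h.eqvGen (fun _ hf => hf) (List.mem_cons_of_mem _ (hverts w hw))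
    exact .trans _ _ _ (.symm _ _ (hconn w₁ hw₁)) (hconn w₂ hw₂)
  · rw [hdeg, List.count_eq_one_of_mem hV (hverts w hw)]

end Walk

/-- Closing a path of `Y` between the ends of `e` gives a cycle whose only frustrated edge
is `e`. -/
lemma exists_isCycle_not_even [Fintype V] {Y : Set E} {b : V → ZMod 2}
    (hY : Disjoint Y (G.frustratedEdges b)) {e : E} (he : e ∈ G.frustratedEdges b)
    (hconn : Relation.EqvGen (G.adjIn Y) (G.ends e).1 (G.ends e).2) :
    ∃ C ⊆ insert e Y, G.IsCycle C ∧ ¬ Even (G.negCount C) := by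
  obtain ⟨l₀, hl₀⟩ := exists_isWalk_of_eqvGen hconn
  obtain ⟨l, hl, hnd⟩ := hl₀.exists_nodup
  have heY : e ∉ Y := fun h => hY.ne_of_mem h he rfl
  have hc : G.IsWalk (insert e Y) (G.ends e).1 (l ++ [(e, (G.ends e).1)]) (G.ends e).1 :=
    isWalk_append_iff.2 ⟨_, hl.mono (subset_insert e Y), mem_insert e Y, Or.inr rfl, rfl⟩
  have hV : ((l ++ [(e, (G.ends e).1)]).map Prod.snd).Nodup := by
    simpa using (List.perm_append_singleton _ _).nodup_iff.2 hnd
  have hE : ((l ++ [(e, (G.ends e).1)]).map Prod.fst).Nodup := by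
    exact List.map_append ▸ (List.perm_append_singleton _ _).nodup_iff.2
      (List.nodup_cons.2 ⟨fun h => heY (hl.edge_mem h), hl.nodup_edges hnd⟩)
  have hC := hc.isCycle (by simp) hV hE
  have hfr : {f | f ∈ (l ++ [(e, (G.ends e).1)]).map Prod.fst} ∩ G.frustratedEdges b = {e} := by
    ext f
    simp only [List.map_append, List.map_cons, List.map_nil, List.mem_append, List.mem_singleton,
      mem_inter_iff, mem_ofPred_eq, Set.mem_singleton_iff]
    refine ⟨fun ⟨hf, hfb⟩ => hf.resolve_left fun hf => hY.ne_of_mem (hl.edge_mem hf) hfb rfl,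
      ?_⟩
    rintro rfl
    exact ⟨Or.inr rfl, he⟩
  refine ⟨_, ?_, hC, fun heven => ?_⟩
  · intro f hf
    simp only [List.map_append, List.map_cons, List.map_nil, List.mem_append, List.mem_singleton,
      mem_ofPred_eq] at hf
    exact hf.elim (fun hf => mem_insert_of_mem e (hl.edge_mem hf)) fun hf => hf ▸ mem_insert e Y
  · have := negCount_eq_ncard_inter_frustratedEdges b (List.finite_toSet _) hC.even_deg
    rw [hfr, ncard_singleton, Nat.cast_one, ZMod.natCast_eq_one_iff_odd] at this
    exact Nat.not_even_iff_odd.2 this heven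

lemma mem_frustratedEdges_add_indicator (b : V → ZMod 2) (S : Set V) (e : E) :
    e ∈ G.frustratedEdges (b + S.indicator 1) ↔
      (e ∈ G.frustratedEdges b ↔ ((G.ends e).1 ∈ S ↔ (G.ends e).2 ∈ S)) := by
  simp only [frustratedEdges, mem_ofPred_eq, Pi.add_apply, indicator_apply, Pi.one_apply]
  generalize b (G.ends e).1 = x, b (G.ends e).2 = y, G.signBit e = z
  by_cases hu : (G.ends e).1 ∈ S <;> by_cases hv : (G.ends e).2 ∈ S <;>
    simp only [hu, hv, if_true, if_false, iff_true, iff_false, iff_self] <;> revert x y z <;> decide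

/-- Harary's balance theorem. When adding an edge `e`, either `e` closes a cycle with edges of
`Y`, or switching the component of one of its ends in `Y` repairs `e` without touching `Y`. -/
theorem exists_disjoint_frustratedEdges [Fintype V] {Y : Set E} (hYfin : Y.Finite)
    (hY : ∀ C ⊆ Y, G.IsCycle C → Even (G.negCount C)) :
    ∃ b : V → ZMod 2, Disjoint Y (G.frustratedEdges b) := by
  induction Y, hYfin using Set.Finite.induction_on with
  | empty => exact ⟨0, empty_disjoint _⟩
  | @insert e Y _ _ ih =>
    obtain ⟨b, hb⟩ := ih fun C hC => hY C (hC.trans (subset_insert e Y))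
    by_cases he : e ∈ G.frustratedEdges b
    swap
    · exact ⟨b, disjoint_insert_left.2 ⟨he, hb⟩⟩
    by_cases hconn : Relation.EqvGen (G.adjIn Y) (G.ends e).1 (G.ends e).2
    · obtain ⟨C, hCY, hC, hodd⟩ := exists_isCycle_not_even hb he hconn
      exact absurd (hY C hCY hC) hodd
    refine ⟨b + (G.comp Y (G.ends e).1).indicator 1, disjoint_insert_left.2 ⟨?_, ?_⟩⟩
    · rw [mem_frustratedEdges_add_indicator]
      exact fun h => hconn ((h.1 he).1 (.refl _))
    · refine disjoint_left.2 fun f hf => ?_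
      have hsame :
          (G.ends f).1 ∈ G.comp Y (G.ends e).1 ↔ (G.ends f).2 ∈ G.comp Y (G.ends e).1 :=
        have hstep : G.adjIn Y (G.ends f).1 (G.ends f).2 := ⟨f, hf, Or.inl rfl⟩
        ⟨fun h => .trans _ _ _ h (.rel _ _ hstep),
          fun h => .trans _ _ _ h (.symm _ _ (.rel _ _ hstep))⟩
      rw [mem_frustratedEdges_add_indicator, iff_true_right hsame]
      exact disjoint_left.1 hb hf

theorem frustrationIndex_eq_sInf_ncard_frustratedEdges [Fintype V] [Finite E]
    (G : SignedGraph V E) :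
    frustrationIndex G = sInf (range fun b : V → ZMod 2 => (G.frustratedEdges b).ncard) := by
  apply le_antisymm
  · obtain ⟨b, hb⟩ :=
      Nat.sInf_mem (range_nonempty fun b : V → ZMod 2 => (G.frustratedEdges b).ncard)
    rw [← hb]
    exact Nat.sInf_le ⟨_, fun C hC hcyc =>
      hcyc.even_negCount_of_disjoint (disjoint_left.2 fun f hf => (hC hf).2), rfl⟩
  · have hne : {n | ∃ X : Set E,
        (∀ C ⊆ univ \ X, G.IsCycle C → Even (G.negCount C)) ∧ X.ncard = n}.Nonempty :=
      ⟨_, univ, fun C hC hcyc => absurd (hC hcyc.1.some_mem).2 (not_not.2 trivial), rfl⟩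
    obtain ⟨X, hX, hXn⟩ := Nat.sInf_mem hne
    obtain ⟨b, hb⟩ := exists_disjoint_frustratedEdges (univ \ X).toFinite hX
    calc sInf (range fun b : V → ZMod 2 => (G.frustratedEdges b).ncard)
        ≤ (G.frustratedEdges b).ncard := Nat.sInf_le ⟨b, rfl⟩
      _ ≤ X.ncard := ncard_le_ncard
          (fun f hf => by_contra fun hfX => disjoint_left.1 hb ⟨trivial, hfX⟩ hf) X.toFinite
      _ = frustrationIndex G := hXn

section Projective

variable {K : Type*} [Field K]

variable (K) in
noncomputable def signVec (b : V → ZMod 2) : V → K := fun v => if b v = 0 then 1 else -1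

lemma signVec_eq_one_or_neg_one (b : V → ZMod 2) (v : V) :
    signVec K b v = 1 ∨ signVec K b v = -1 := by
  unfold signVec
  split_ifs <;> simp

lemma exists_signVec_eq {a : V → K} (ha : ∀ v, a v = 1 ∨ a v = -1) :
    ∃ b, signVec K b = a := by
  refine ⟨fun v => if a v = 1 then 0 else 1, funext fun v => ?_⟩
  by_cases h : a v = 1
  · simp [signVec, h]
  · simp only [signVec, if_neg h, one_ne_zero, if_false]
    exact ((ha v).resolve_left h).symm

lemma vanishesAt_mk_iff [Fintype V] (a w : V → K) (hw : w ≠ 0) :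
    vanishesAt a (Projectivization.mk K w hw) ↔ ∑ v, a v * w v = 0 := by
  refine ⟨fun h => h w hw rfl, fun h w' hw' hww' => ?_⟩
  obtain ⟨c, rfl⟩ := (Projectivization.mk_eq_mk_iff K _ _ _ _).1 hww'.symm
  simp only [Pi.smul_apply, Units.smul_def, smul_eq_mul, mul_left_comm _ (c : K),
    ← Finset.mul_sum, h, mul_zero]

variable {e : E}

lemma incCol_fst (hloop : (G.ends e).1 ≠ (G.ends e).2) : G.incCol K e (G.ends e).1 = 1 := by
  rw [incCol, if_pos rfl, if_neg hloop.symm, add_zero]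

lemma incCol_snd (hloop : (G.ends e).1 ≠ (G.ends e).2) :
    G.incCol K e (G.ends e).2 = if G.sign e then -1 else 1 := by
  rw [incCol, if_neg hloop, if_pos rfl, zero_add]

lemma incCol_ne_zero (hloop : (G.ends e).1 ≠ (G.ends e).2) : G.incCol K e ≠ 0 := fun h =>
  one_ne_zero ((incCol_fst hloop).symm.trans (congrFun h _))

lemma eq_fst_or_eq_snd_of_incCol_ne_zero {w : V} (h : G.incCol K e w ≠ 0) :
    (G.ends e).1 = w ∨ (G.ends e).2 = w := by
  by_contra! hw
  simp [incCol, hw.1, hw.2] at h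

lemma sum_mul_incCol [Fintype V] (a : V → K) :
    ∑ v, a v * G.incCol K e v = a (G.ends e).1 + a (G.ends e).2 * if G.sign e then -1 else 1 := by
  simp only [incCol, mul_add, Finset.sum_add_distrib, mul_ite, mul_one, mul_zero,
    Finset.sum_ite_eq]
  simp

lemma sum_signVec_mul_incCol_eq_zero_iff [Fintype V] (hchar : ringChar K ≠ 2) (b : V → ZMod 2) :
    ∑ v, signVec K b v * G.incCol K e v = 0 ↔ e ∉ G.frustratedEdges b := by
  have h2 : (2 : K) ≠ 0 := Ring.two_ne_zero hchar
  have h1 : (1 : ZMod 2) ≠ 0 := by decide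
  have h11 : (1 : ZMod 2) + 1 = 0 := by decide
  rw [sum_mul_incCol, frustratedEdges, mem_ofPred_eq, not_not, signBit, signVec, signVec]
  have hbit : ∀ x : ZMod 2, x = 0 ∨ x = 1 := by decide
  rcases G.sign e <;> rcases hbit (b (G.ends e).1) with hx | hx <;>
    rcases hbit (b (G.ends e).2) with hy | hy <;> norm_num [hx, hy, h1, h11, h2]

lemma mk_incCol_injective (hloop : ∀ e, (G.ends e).1 ≠ (G.ends e).2)
    (hsimple : ∀ e f, (G.ends e = G.ends f ∨ G.ends e = Prod.swap (G.ends f)) → e = f) :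
    Function.Injective fun e =>
      Projectivization.mk K (G.incCol K e) (incCol_ne_zero (hloop e)) := by
  intro e f h
  obtain ⟨c, hc⟩ := (Projectivization.mk_eq_mk_iff K _ _ _ _).1 h
  have hsupp : ∀ w, G.incCol K f w ≠ 0 → (G.ends e).1 = w ∨ (G.ends e).2 = w := fun w hw =>
    eq_fst_or_eq_snd_of_incCol_ne_zero (K := K) <| by
      rw [← hc, Pi.smul_apply, Units.smul_def, smul_eq_mul]
      exact mul_ne_zero c.ne_zero hw
  have h₁ := hsupp _ (by rw [incCol_fst (hloop f)]; exact one_ne_zero)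
  have h₂ := hsupp _ (by rw [incCol_snd (hloop f)]; split_ifs <;> norm_num)
  refine (hsimple f e ?_).symm
  rcases h₁ with h₁ | h₁ <;> rcases h₂ with h₂ | h₂
  · exact absurd (h₁.symm.trans h₂) (hloop f)
  · exact Or.inl (Prod.ext h₁.symm h₂.symm)
  · exact Or.inr (Prod.ext h₁.symm h₂.symm)
  · exact absurd (h₁.symm.trans h₂) (hloop f)

lemma ncard_projPoints_diff_vanishesAt_signVec [Fintype V] (hchar : ringChar K ≠ 2)
    (hloop : ∀ e, (G.ends e).1 ≠ (G.ends e).2)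
    (hsimple : ∀ e f, (G.ends e = G.ends f ∨ G.ends e = Prod.swap (G.ends f)) → e = f)
    (b : V → ZMod 2) :
    (projPoints G K \ {p ∈ projPoints G K | vanishesAt (signVec K b) p}).ncard =
      (G.frustratedEdges b).ncard := by
  have hvan : ∀ e (he : G.incCol K e ≠ 0),
      vanishesAt (signVec K b) (Projectivization.mk K (G.incCol K e) he) ↔
        e ∉ G.frustratedEdges b := fun e he => by
    rw [vanishesAt_mk_iff, sum_signVec_mul_incCol_eq_zero_iff hchar]
  have himage : projPoints G K \ {p ∈ projPoints G K | vanishesAt (signVec K b) p} =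
      (fun e => Projectivization.mk K (G.incCol K e) (incCol_ne_zero (hloop e))) ''
        G.frustratedEdges b := by
    ext p
    constructor
    · rintro ⟨⟨e, he, rfl⟩, hp⟩
      exact ⟨e, by_contra fun hfr => hp ⟨⟨e, he, rfl⟩, (hvan e he).2 hfr⟩, rfl⟩
    · rintro ⟨e, hfr, rfl⟩
      exact ⟨⟨e, _, rfl⟩, fun hp => (hvan e _).1 hp.2 hfr⟩
  rw [himage, (mk_incCol_injective hloop hsimple).injOn.ncard_image]

end Projective

end SignedGraph

theorem stmt17_general {V E : Type*} [Fintype V] [Fintype E] (G : SignedGraph V E)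
    (K : Type*) [Field K] (hchar : ringChar K ≠ 2)
    (hloop : ∀ e, (G.ends e).1 ≠ (G.ends e).2)
    (hsimple : ∀ e f, (G.ends e = G.ends f ∨ G.ends e = Prod.swap (G.ends f)) → e = f) :
    frustrationIndex G =
      sInf {n | ∃ a : V → K, (∀ v, a v = 1 ∨ a v = -1) ∧
        (projPoints G K \ {p ∈ projPoints G K | vanishesAt a p}).ncard = n} := by
  have hcard := SignedGraph.ncard_projPoints_diff_vanishesAt_signVec hchar hloop hsimple
  have hcount : {n | ∃ a : V → K, (∀ v, a v = 1 ∨ a v = -1) ∧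
      (projPoints G K \ {p ∈ projPoints G K | vanishesAt a p}).ncard = n} =
        range fun b : V → ZMod 2 => (G.frustratedEdges b).ncard := by
    ext n
    constructor
    · rintro ⟨a, ha, rfl⟩
      obtain ⟨b, rfl⟩ := SignedGraph.exists_signVec_eq ha
      exact ⟨b, (hcard b).symm⟩
    · rintro ⟨b, rfl⟩
      exact ⟨_, SignedGraph.signVec_eq_one_or_neg_one b, hcard b⟩
  rw [SignedGraph.frustrationIndex_eq_sInf_ncard_frustratedEdges, hcount]

theorem stmt17 {V E : Type*} [Fintype V] [Fintype E] (G : SignedGraph V E)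
    (K : Type*) [Field K] (hchar : ringChar K ≠ 2)
    (hconn : G.Connected)
    (hloop : ∀ e, (G.ends e).1 ≠ (G.ends e).2)
    (hsimple : ∀ e f, (G.ends e = G.ends f ∨ G.ends e = Prod.swap (G.ends f)) → e = f) :
    frustrationIndex G =
      sInf {n | ∃ a : V → K, (∀ v, a v = 1 ∨ a v = -1) ∧
        (projPoints G K \ {p ∈ projPoints G K | vanishesAt a p}).ncard = n} :=
  stmt17_general G K hchar hloop hsimple
end

section
/- Let G_σ be a connected balanced signed graph with s vertices and underlying multigraph G, and let C be its incidence matrix code over any finite field. Then for 1 ≤ r ≤ s − 1, δ_r(C) equals the minimum number of edges of G forming a union of r non-redundant cocycles (bonds) of G. -/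
open Classical Set

/-- A cocycle (bond) of the underlying multigraph: a minimal set of edges whose removal
increases the number of connected components. -/
def IsBond {V E : Type*} (G : SignedGraph V E) (X : Set E) : Prop :=
  G.numComponents Set.univ < G.numComponents (Set.univ \ X) ∧
    ∀ Y ⊂ X, G.numComponents (Set.univ \ Y) = G.numComponents Set.univ

namespace StmtAux

open SignedGraph

variable {V E : Type*} [Fintype V] [Fintype E] {G : SignedGraph V E}

/-- The connectivity relation on vertices via edges in `X`. -/
abbrev R (G : SignedGraph V E) (X : Set E) : V → V → Prop := Relation.EqvGen (G.adjIn X)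

lemma adjIn_symm {X : Set E} {u v : V} (h : G.adjIn X u v) : G.adjIn X v u := by
  obtain ⟨e, he, h⟩ := h
  exact ⟨e, he, h.symm⟩

lemma R.refl {X : Set E} (v : V) : R G X v v := Relation.EqvGen.refl v

lemma R.symm {X : Set E} {u v : V} (h : R G X u v) : R G X v u := Relation.EqvGen.symm _ _ h

lemma R.trans {X : Set E} {u v w : V} (h : R G X u v) (h' : R G X v w) : R G X u w :=
  Relation.EqvGen.trans _ _ _ h h'

lemma R.of_adj {X : Set E} {u v : V} (h : G.adjIn X u v) : R G X u v := Relation.EqvGen.rel _ _ h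

lemma R.of_edge {X : Set E} {e : E} (he : e ∈ X) : R G X (G.ends e).1 (G.ends e).2 :=
  R.of_adj ⟨e, he, Or.inl rfl⟩

lemma R.mono {X Y : Set E} (hXY : X ⊆ Y) {u v : V} (h : R G X u v) : R G Y u v := by
  induction h with
  | rel a b hab => exact R.of_adj (by obtain ⟨e, he, h⟩ := hab; exact ⟨e, hXY he, h⟩)
  | refl a => exact R.refl a
  | symm a b _ ih => exact ih.symm
  | trans a b c _ _ ih ih' => exact ih.trans ih'

lemma mem_comp_self (X : Set E) (v : V) : v ∈ G.comp X v := Relation.EqvGen.refl v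

lemma mem_comp_iff {X : Set E} {u v : V} : v ∈ G.comp X u ↔ R G X u v := Iff.rfl

lemma comp_eq_of_R {X : Set E} {u v : V} (h : R G X u v) : G.comp X u = G.comp X v := by
  ext w
  exact ⟨fun hw => (h.symm).trans hw, fun hw => h.trans hw⟩

lemma R_of_comp_eq {X : Set E} {u v : V} (h : G.comp X u = G.comp X v) : R G X u v := by
  have : v ∈ G.comp X u := h ▸ mem_comp_self X v
  exact this

lemma numComponents_eq (X : Set E) : G.numComponents X = (Set.range (G.comp X)).ncard := by
  unfold SignedGraph.numComponents
  congr 1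
  ext K
  exact ⟨fun ⟨v, hv⟩ => ⟨v, hv.symm⟩, fun ⟨v, hv⟩ => ⟨v, hv.symm⟩⟩

lemma numComponents_le_of_subset {X Y : Set E} (h : X ⊆ Y) :
    G.numComponents Y ≤ G.numComponents X := by
  classical
  rw [numComponents_eq, numComponents_eq]
  set f : Set V → Set V := fun K =>
    if hK : ∃ v, K = G.comp X v then G.comp Y hK.choose else ∅ with hf
  have himg : Set.range (G.comp Y) ⊆ f '' Set.range (G.comp X) := by
    rintro K ⟨v, rfl⟩
    refine ⟨G.comp X v, ⟨v, rfl⟩, ?_⟩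
    have hK : ∃ w, G.comp X v = G.comp X w := ⟨v, rfl⟩
    rw [hf]; simp only [dif_pos hK]
    have : R G X hK.choose v := (R_of_comp_eq hK.choose_spec).symm
    exact comp_eq_of_R (R.mono h this)
  calc (Set.range (G.comp Y)).ncard ≤ (f '' Set.range (G.comp X)).ncard :=
        Set.ncard_le_ncard himg (Set.toFinite _)
    _ ≤ (Set.range (G.comp X)).ncard := Set.ncard_image_le (Set.toFinite _)

lemma numComponents_eq_one [Nonempty V] {X : Set E} (h : ∀ u v, R G X u v) :
    G.numComponents X = 1 := by
  rw [numComponents_eq]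
  have : Set.range (G.comp X) = {G.comp X (Classical.arbitrary V)} := by
    ext K
    constructor
    · rintro ⟨v, rfl⟩
      exact (comp_eq_of_R (h v (Classical.arbitrary V))).symm ▸ rfl
    · rintro rfl
      exact ⟨_, rfl⟩
  rw [this, Set.ncard_singleton]

lemma R_of_numComponents_eq_one {X : Set E} (h : G.numComponents X = 1) (u v : V) :
    R G X u v := by
  rw [numComponents_eq, Set.ncard_eq_one] at h
  obtain ⟨K, hK⟩ := h
  have hu : G.comp X u = K := by
    have := Set.mem_singleton_iff.mp (hK ▸ Set.mem_range_self u); exact this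
  have hv : G.comp X v = K := by
    have := Set.mem_singleton_iff.mp (hK ▸ Set.mem_range_self v); exact this
  exact R_of_comp_eq (hu.trans hv.symm)

lemma one_lt_numComponents {X : Set E} {u w : V} (h : ¬ R G X u w) :
    1 < G.numComponents X := by
  rw [numComponents_eq]
  rw [Set.one_lt_ncard_iff (Set.toFinite _)]
  refine ⟨G.comp X u, G.comp X w, ⟨u, rfl⟩, ⟨w, rfl⟩, fun hc => h (R_of_comp_eq hc)⟩

/-- If a set of vertices `S` is closed under edges of `X`, then it is closed under `R G X`. -/
lemma closed_under_R {X : Set E} {S : Set V}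
    (hS : ∀ e ∈ X, ((G.ends e).1 ∈ S ↔ (G.ends e).2 ∈ S)) {u v : V}
    (h : R G X u v) : u ∈ S ↔ v ∈ S := by
  induction h with
  | rel a b hab =>
    obtain ⟨e, he, hab⟩ := hab
    rcases hab with h' | h'
    · have := hS e he; rw [h'] at this; exact this
    · have := hS e he; rw [h'] at this; exact this.symm
  | refl a => exact Iff.rfl
  | symm a b _ ih => exact ih.symm
  | trans a b c _ _ ih ih' => exact ih.trans ih'

end StmtAux
namespace StmtAux2

open SignedGraph StmtAux

set_option linter.unusedSectionVars false

variable {V E : Type*} [Fintype V] [Fintype E] {G : SignedGraph V E}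
variable [Nonempty E]

/-- One step of a signed walk, tracking a sign bit. -/
def Step (G : SignedGraph V E) (e : E) (p q : V × Bool) : Prop :=
  (G.ends e = (p.1, q.1) ∨ G.ends e = (q.1, p.1)) ∧ q.2 = (if G.sign e then p.2 else !p.2)

def T (G : SignedGraph V E) (p q : V × Bool) : Prop := ∃ e, Step G e p q

lemma Step.symm {e : E} {p q : V × Bool} (h : Step G e p q) : Step G e q p := by
  obtain ⟨h1, h2⟩ := h
  refine ⟨h1.symm, ?_⟩
  cases hs : G.sign e <;> rw [hs] at h2 <;> simp at h2 ⊢ <;> simp [h2]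

lemma Step.flip {e : E} {p q : V × Bool} (h : Step G e p q) :
    Step G e (p.1, !p.2) (q.1, !q.2) := by
  obtain ⟨h1, h2⟩ := h
  refine ⟨h1, ?_⟩
  cases hs : G.sign e <;> rw [hs] at h2 <;> simp [h2]

lemma T.symm {p q : V × Bool} (h : T G p q) : T G q p := by
  obtain ⟨e, he⟩ := h; exact ⟨e, he.symm⟩

lemma rtgT_symm {p q : V × Bool} (h : Relation.ReflTransGen (T G) p q) :
    Relation.ReflTransGen (T G) q p := by
  induction h with
  | refl => exact .refl
  | tail h' step ih => exact Relation.ReflTransGen.trans (.single step.symm) ih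

lemma rtgT_flip {p q : V × Bool} (h : Relation.ReflTransGen (T G) p q) :
    Relation.ReflTransGen (T G) (p.1, !p.2) (q.1, !q.2) := by
  induction h with
  | refl => exact .refl
  | tail h' step ih =>
    obtain ⟨e, he⟩ := step
    exact ih.tail ⟨e, he.flip⟩

/-- Lifting connectivity to signed walks. -/
lemma lift {u v : V} (h : R G Set.univ u v) (b : Bool) :
    ∃ b', Relation.ReflTransGen (T G) (u, b) (v, b') := by
  induction h generalizing b with
  | rel a c hac =>
    obtain ⟨e, -, hends⟩ := hac
    rcases hends with he | he
    · exact ⟨if G.sign e then b else !b, .single ⟨e, Or.inl (by simp [he]), rfl⟩⟩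
    · exact ⟨if G.sign e then b else !b, .single ⟨e, Or.inr (by simp [he]), rfl⟩⟩
  | refl a => exact ⟨b, .refl⟩
  | symm a c _ ih =>
    obtain ⟨b', hb'⟩ := ih b
    by_cases hbb : b' = b
    · exact ⟨b, by rw [hbb] at hb'; exact rtgT_symm hb'⟩
    · have : b' = !b := by cases b <;> cases b' <;> simp_all
      refine ⟨!b, ?_⟩
      have := rtgT_flip (rtgT_symm hb')
      simpa [this, ‹b' = !b›] using this
  | trans a c d _ _ ih ih' =>
    obtain ⟨b₁, h₁⟩ := ih b
    obtain ⟨b₂, h₂⟩ := ih' b₁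
    exact ⟨b₂, h₁.trans h₂⟩

/-- Indexed walks. -/
def IsWalk (G : SignedGraph V E) (n : ℕ) (vs : ℕ → V × Bool) (es : ℕ → E) : Prop :=
  ∀ i < n, Step G (es i) (vs i) (vs (i + 1))

lemma exists_walk {p q : V × Bool} (h : Relation.ReflTransGen (T G) p q) :
    ∃ n vs es, vs 0 = p ∧ vs n = q ∧ IsWalk G n vs es := by
  induction h with
  | refl => exact ⟨0, fun _ => p, fun _ => Classical.arbitrary E, rfl, rfl, fun i hi => by omega⟩
  | @tail m q h' step ih =>
    obtain ⟨n, vs, es, h0, hn, hw⟩ := ih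
    obtain ⟨e, he⟩ := step
    refine ⟨n + 1, fun i => if i ≤ n then vs i else q, fun i => if i < n then es i else e,
      by simp [h0], by simp, fun i hi => ?_⟩
    rcases lt_or_ge i n with hin | hin
    · have h1 : i ≤ n := hin.le
      have h2 : i + 1 ≤ n := hin
      simpa [h1, h2, hin] using hw i hin
    · have hin' : i = n := by omega
      subst hin'
      simpa [hn] using he

end StmtAux2
namespace StmtAux2

open SignedGraph StmtAux

variable {V E : Type*} [Fintype V] [Fintype E] {G : SignedGraph V E} [Nonempty E]

set_option linter.unusedSectionVars false
set_option maxHeartbeats 2000000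

lemma cycle_contradiction (hbal : G.Balanced) (n : ℕ) (hnpos : 0 < n)
    (vs : ℕ → V × Bool) (es : ℕ → E) (v : V) (b : Bool)
    (h0 : vs 0 = (v, b)) (hn : vs n = (v, !b)) (hw : IsWalk G n vs es)
    (hdist : ∀ i j, i < j → j ≤ n → ¬(i = 0 ∧ j = n) → (vs i).1 ≠ (vs j).1) : False := by
  classical
  have hv0 : (vs 0).1 = v := by rw [h0]
  have hvn : (vs n).1 = v := by rw [hn]
  have hb0 : (vs 0).2 = b := by rw [h0]
  have hbn : (vs n).2 = !b := by rw [hn]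
  -- edge injectivity
  have hinjE : ∀ i j, i < n → j < n → es i = es j → i = j := by
    suffices h : ∀ i j, i < j → j < n → es i ≠ es j by
      intro i j hi hj he
      rcases lt_trichotomy i j with h' | h' | h'
      · exact absurd he (h i j h' hj)
      · exact h'
      · exact absurd he.symm (h j i h' hi)
    intro i j hij hj he
    obtain ⟨hendsi, hbli⟩ := hw i (by omega)
    obtain ⟨hendsj, hblj⟩ := hw j hj
    rw [he] at hendsi
    rcases hendsi with h1 | h1 <;> rcases hendsj with h2 | h2
    · -- same orientation
      have h3 : (vs i).1 = (vs j).1 := by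
        have := h1.symm.trans h2; exact (Prod.mk.injEq _ _ _ _ ▸ this).1
      exact hdist i j hij (by omega) (by omega) h3
    · -- (vs i, vs i+1) = (vs (j+1), vs j)
      have h4 := h1.symm.trans h2
      have h5 : (vs i).1 = (vs (j+1)).1 := (Prod.mk.injEq _ _ _ _ ▸ h4).1
      have h6 : (vs (i+1)).1 = (vs j).1 := (Prod.mk.injEq _ _ _ _ ▸ h4).2
      by_cases hjn : j + 1 = n
      · -- vs (j+1) = vs n
        by_cases hi0 : i = 0
        · subst hi0
          -- (vs 1).1 = (vs j).1, with 1 ≤ j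
          by_cases h1j : 1 = j
          · -- n = 2, es 0 = es 1 : bool contradiction
            have hn2 : n = 2 := by omega
            subst h1j
            rw [← he] at hblj
            have : (vs 2).2 = (vs 0).2 := by
              rw [hblj, hbli]
              cases hs : G.sign (es 0) <;> simp
            rw [show (2:ℕ) = n by omega, hbn, hb0] at this
            simp at this
          · exact hdist 1 j (by omega) (by omega) (by omega) (by simpa using h6)
        · have h7 : (vs i).1 = (vs 0).1 := by rw [h5, hjn, hvn, hv0]
          exact hdist 0 i (by omega) (by omega) (by omega) h7.symm
      · exact hdist i (j+1) (by omega) (by omega) (by omega) h5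
    · -- (vs (i+1), vs i) = (vs j, vs (j+1))
      have h4 := h1.symm.trans h2
      have h5 : (vs (i+1)).1 = (vs j).1 := (Prod.mk.injEq _ _ _ _ ▸ h4).1
      have h6 : (vs i).1 = (vs (j+1)).1 := (Prod.mk.injEq _ _ _ _ ▸ h4).2
      by_cases hjn : j + 1 = n
      · by_cases hi0 : i = 0
        · subst hi0
          by_cases h1j : 1 = j
          · have hn2 : n = 2 := by omega
            subst h1j
            rw [← he] at hblj
            have : (vs 2).2 = (vs 0).2 := by
              rw [hblj, hbli]
              cases hs : G.sign (es 0) <;> simp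
            rw [show (2:ℕ) = n by omega, hbn, hb0] at this
            simp at this
          · exact hdist 1 j (by omega) (by omega) (by omega) (by simpa using h5)
        · have h7 : (vs i).1 = (vs 0).1 := by rw [h6, hjn, hvn, hv0]
          exact hdist 0 i (by omega) (by omega) (by omega) h7.symm
      · exact hdist i (j+1) (by omega) (by omega) (by omega) h6
    · have h3 : (vs i).1 = (vs j).1 := by
        have := h1.symm.trans h2
        have h4 := (Prod.mk.injEq _ _ _ _ ▸ this).2
        exact h4
      exact hdist i j hij (by omega) (by omega) h3
  set Cfin : Finset E := (Finset.range n).image es with hCfin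
  set C : Set E := ↑Cfin with hC
  have hmemC : ∀ i, i < n → es i ∈ C := by
    intro i hi
    exact Finset.mem_coe.mpr (Finset.mem_image.mpr ⟨i, Finset.mem_range.mpr hi, rfl⟩)
  -- vertex set
  have hverts : G.verts C = {w | ∃ k, k < n ∧ (vs k).1 = w} := by
    ext w
    constructor
    · rintro ⟨e, heC, htch⟩
      obtain ⟨i, hi, rfl⟩ := Finset.mem_image.mp (Finset.mem_coe.mp heC)
      have hi' := Finset.mem_range.mp hi
      obtain ⟨hends, -⟩ := hw i hi'
      rcases hends with h1 | h1 <;> rcases htch with h2 | h2 <;> rw [h1] at h2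
      · exact ⟨i, hi', h2⟩
      · rcases Nat.lt_or_ge (i+1) n with h3 | h3
        · exact ⟨i+1, h3, h2⟩
        · have : i + 1 = n := by omega
          exact ⟨0, hnpos, by rw [hv0, ← hvn, ← this]; exact h2⟩
      · rcases Nat.lt_or_ge (i+1) n with h3 | h3
        · exact ⟨i+1, h3, h2⟩
        · have : i + 1 = n := by omega
          exact ⟨0, hnpos, by rw [hv0, ← hvn, ← this]; exact h2⟩
      · exact ⟨i, hi', h2⟩
    · rintro ⟨k, hk, rfl⟩
      refine ⟨es k, hmemC k hk, ?_⟩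
      obtain ⟨hends, -⟩ := hw k hk
      rcases hends with h1 | h1
      · exact Or.inl (by rw [h1])
      · exact Or.inr (by rw [h1])
  -- connectivity
  have hchain : ∀ k, k ≤ n → R G C (vs 0).1 (vs k).1 := by
    intro k
    induction k with
    | zero => exact fun _ => R.refl _
    | succ k ih =>
      intro hk
      refine (ih (by omega)).trans (R.of_adj ⟨es k, hmemC k (by omega), ?_⟩)
      obtain ⟨hends, -⟩ := hw k (by omega)
      rcases hends with h1 | h1
      · exact Or.inl h1
      · exact Or.inr h1
  have hconnC : G.ConnSet C := by
    intro u hu w hw'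
    rw [hverts] at hu hw'
    obtain ⟨k, hk, rfl⟩ := hu
    obtain ⟨l, hl, rfl⟩ := hw'
    exact (hchain k hk.le).symm.trans (hchain l hl.le)
  -- degree 2
  have hdeg : ∀ w ∈ G.verts C, G.deg C w = 2 := by
    intro w hwv
    rw [hverts] at hwv
    obtain ⟨k, hk, rfl⟩ := hwv
    have hiff1 : ∀ i, i < n → (((vs i).1 = (vs k).1) ↔ i = k) := by
      intro i hi
      constructor
      · intro h
        by_contra hik
        rcases lt_trichotomy i k with h' | h' | h'
        · exact hdist i k h' (by omega) (by omega) h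
        · exact hik h'
        · exact hdist k i h' (by omega) (by omega) h.symm
      · rintro rfl; rfl
    obtain ⟨k', hk'lt, hk'spec⟩ :
        ∃ k', k' < n ∧ (∀ i, i < n → (((vs (i+1)).1 = (vs k).1) ↔ i = k')) := by
      by_cases hk0 : k = 0
      · refine ⟨n-1, by omega, fun i hi => ?_⟩
        subst hk0
        constructor
        · intro h
          rcases Nat.lt_or_ge (i+1) n with h3 | h3
          · exact absurd h (hdist 0 (i+1) (by omega) (by omega) (by omega)).symm
          · omega
        · intro h
          have h4 : i + 1 = n := by omega
          rw [h4, hvn, hv0]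
      · refine ⟨k-1, by omega, fun i hi => ?_⟩
        constructor
        · intro h
          rcases Nat.lt_or_ge (i+1) n with h3 | h3
          · have h5 : i + 1 = k := by
              by_contra hik
              rcases lt_trichotomy (i+1) k with h' | h' | h'
              · exact hdist (i+1) k h' (by omega) (by omega) h
              · exact hik h'
              · exact hdist k (i+1) h' (by omega) (by omega) h.symm
            omega
          · have h4 : i + 1 = n := by omega
            rw [h4, hvn, ← hv0] at h
            exact absurd h (hdist 0 k (by omega) (by omega) (by omega))
        · intro h
          have h5 : i + 1 = k := by omega
          rw [h5]
    unfold SignedGraph.deg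
    rw [hC, finsum_mem_coe_finset, hCfin,
      Finset.sum_image (fun x hx y hy h =>
        hinjE x y (Finset.mem_range.mp hx) (Finset.mem_range.mp hy) h)]
    have hterm : ∀ i ∈ Finset.range n,
        ((if (G.ends (es i)).1 = (vs k).1 then 1 else 0) +
          (if (G.ends (es i)).2 = (vs k).1 then 1 else 0) : ℕ) =
        ((if i = k then 1 else 0) + (if i = k' then 1 else 0)) := by
      intro i hi
      have hi' := Finset.mem_range.mp hi
      obtain ⟨hends, -⟩ := hw i hi'
      rcases hends with h1 | h1 <;> rw [h1] <;> dsimp only <;>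
        rw [if_congr (hiff1 i hi') rfl rfl, if_congr (hk'spec i hi') rfl rfl] <;>
        first | rfl | exact Nat.add_comm _ _
    rw [Finset.sum_congr rfl hterm, Finset.sum_add_distrib]
    have s1 : (∑ i ∈ Finset.range n, if i = k then (1:ℕ) else 0) = 1 := by
      rw [Finset.sum_ite_eq' (Finset.range n) k (fun _ => (1:ℕ))]
      simp [hk]
    have s2 : (∑ i ∈ Finset.range n, if i = k' then (1:ℕ) else 0) = 1 := by
      rw [Finset.sum_ite_eq' (Finset.range n) k' (fun _ => (1:ℕ))]
      simp [hk'lt]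
    rw [s1, s2]
  -- parity
  set Nk : ℕ → ℕ := fun k => ((Finset.range k).filter (fun i => G.sign (es i) = false)).card
    with hNk
  have hins : ∀ k, Nk (k+1) = Nk k + (if G.sign (es k) = false then 1 else 0) := by
    intro k
    simp only [hNk, Finset.range_add_one, Finset.filter_insert]
    by_cases hs : G.sign (es k) = false
    · rw [if_pos hs, Finset.card_insert_of_notMem (by simp), if_pos hs]
    · rw [if_neg hs, if_neg hs, Nat.add_zero]
  have hpar : ∀ k, k ≤ n → (vs k).2 = (if Even (Nk k) then b else !b) := by
    intro k
    induction k with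
    | zero => intro _; simp [hNk, hb0]
    | succ k ih =>
      intro hk
      have ihk := ih (by omega)
      obtain ⟨-, hbl⟩ := hw k (by omega)
      cases hs : G.sign (es k)
      · rw [hs] at hbl
        simp only [Bool.false_eq_true, if_false] at hbl
        have hins' : Nk (k+1) = Nk k + 1 := by rw [hins k, hs]; simp
        rw [hbl, ihk, hins']
        by_cases he : Even (Nk k)
        · rw [if_pos he, if_neg (by rw [Nat.even_add_one]; exact not_not_intro he)]
        · rw [if_neg he, if_pos (by rw [Nat.even_add_one]; exact he)]
          simp
      · rw [hs] at hbl
        simp only [if_true] at hbl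
        have hins' : Nk (k+1) = Nk k := by rw [hins k, hs]; simp
        rw [hbl, ihk, hins']
  have hodd : ¬ Even (Nk n) := by
    intro hev
    have h := hpar n le_rfl
    rw [hbn, if_pos hev] at h
    simp at h
  -- negCount
  have hneg : G.negCount C = Nk n := by
    unfold SignedGraph.negCount
    have hset : {e ∈ C | G.sign e = false} = ↑(Cfin.filter (fun e => G.sign e = false)) := by
      ext e
      simp [hC, Finset.mem_filter]
    rw [hset, Set.ncard_coe_finset]
    simp only [hCfin, hNk]
    rw [Finset.filter_image, Finset.card_image_of_injOn]
    intro x hx y hy hxy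
    simp only [Finset.coe_filter, Set.mem_setOf_eq, Finset.mem_range] at hx hy
    exact hinjE x y hx.1 hy.1 hxy
  have hcyc : G.IsCycle C := ⟨⟨es 0, hmemC 0 hnpos⟩, hconnC, hdeg⟩
  have := hbal C hcyc
  rw [hneg] at this
  exact hodd this

end StmtAux2
namespace StmtAux2

open SignedGraph StmtAux

variable {V E : Type*} [Fintype V] [Fintype E] {G : SignedGraph V E} [Nonempty E]

set_option linter.unusedSectionVars false
set_option maxHeartbeats 1000000

lemma noflip_aux (hbal : G.Balanced) :
    ∀ n : ℕ, ∀ (vs : ℕ → V × Bool) (es : ℕ → E) (v : V) (b : Bool),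
      vs 0 = (v, b) → vs n = (v, !b) → IsWalk G n vs es → False := by
  intro n
  induction n using Nat.strong_induction_on with
  | _ n IH =>
  intro vs es v b h0 hn hw
  rcases Nat.eq_zero_or_pos n with rfl | hnpos
  · rw [h0] at hn
    have : b = !b := congrArg Prod.snd hn
    simp at this
  by_cases hrep : ∃ i j, i < j ∧ j ≤ n ∧ ¬(i = 0 ∧ j = n) ∧ (vs i).1 = (vs j).1
  · obtain ⟨i, j, hij, hjn, hnot, hvv⟩ := hrep
    by_cases hb : (vs i).2 = (vs j).2
    · -- splice out the closed detour between i and j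
      have hvsij : vs i = vs j := Prod.ext hvv hb
      have hmlt : n - (j - i) < n := by omega
      refine IH (n - (j - i)) hmlt
        (fun k => if k < i then vs k else vs (k + (j - i)))
        (fun k => if k < i then es k else es (k + (j - i))) v b ?_ ?_ ?_
      · rcases Nat.eq_zero_or_pos i with rfl | hi
        · simpa [hvsij.symm] using h0
        · simpa [hi] using h0
      · have h1 : ¬ (n - (j - i) < i) := by omega
        have h2 : n - (j - i) + (j - i) = n := by omega
        simp [h1, h2, hn]
      · intro k hk
        by_cases hki : k < i
        · by_cases hk1 : k + 1 < i
          · simpa [hki, hk1] using hw k (by omega)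
          · have hk1' : k + 1 = i := by omega
            have hs := hw k (by omega)
            have e2 : k + 1 + (j - i) = j := by omega
            simp only [if_pos hki, if_neg hk1, e2]
            rw [← hvsij, ← hk1']
            exact hs
        · have h3 : ¬ (k + 1 < i) := by omega
          have hs := hw (k + (j - i)) (by omega)
          simp only [if_neg hki, if_neg h3]
          have e3 : k + 1 + (j - i) = k + (j - i) + 1 := by omega
          rw [e3]
          exact hs
    · -- inner closed walk with flipped bool
      have hbj : (vs j).2 = !(vs i).2 := by
        cases h1 : (vs i).2 <;> cases h2 : (vs j).2 <;> simp_all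
      have hmlt : j - i < n := by omega
      refine IH (j - i) hmlt (fun k => vs (k + i)) (fun k => es (k + i)) (vs i).1 (vs i).2
        ?_ ?_ ?_
      · show vs (0 + i) = _
        rw [Nat.zero_add]
      · show vs (j - i + i) = _
        rw [show j - i + i = j by omega]
        exact Prod.ext hvv.symm hbj
      · intro k hk
        simpa [show k + i + 1 = k + 1 + i by omega] using hw (k + i) (by omega)
  · -- no vertex repetition: the walk is a cycle, contradict balance
    push_neg at hrep
    have hdist : ∀ i j, i < j → j ≤ n → ¬(i = 0 ∧ j = n) → (vs i).1 ≠ (vs j).1 :=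
      fun i j h1 h2 h3 => hrep i j h1 h2 (fun hi0 hjn => h3 ⟨hi0, hjn⟩)
    exact cycle_contradiction hbal n hnpos vs es v b h0 hn hw hdist

end StmtAux2
namespace StmtAux2

open SignedGraph StmtAux

variable {V E : Type*} [Fintype V] [Fintype E] {G : SignedGraph V E} [Nonempty E]

set_option linter.unusedSectionVars false

lemma noflip (hbal : G.Balanced) {v : V} {b : Bool} :
    ¬ Relation.ReflTransGen (T G) (v, b) (v, !b) := by
  intro h
  obtain ⟨n, vs, es, h0, hn, hw⟩ := exists_walk h
  exact noflip_aux hbal n vs es v b h0 hn hw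

/-- Balance plus connectivity yields a switching function. -/
lemma exists_switch [Nonempty V] (hconn : G.Connected) (hbal : G.Balanced) :
    ∃ c : V → Bool, ∀ e, ((c (G.ends e).1 = c (G.ends e).2) ↔ G.sign e = true) := by
  classical
  set v0 := Classical.arbitrary V with hv0
  have hex : ∀ v, ∃ b, Relation.ReflTransGen (T G) (v0, true) (v, b) :=
    fun v => lift (hconn v0 v) true
  choose c hc using hex
  have huniq : ∀ v b, Relation.ReflTransGen (T G) (v0, true) (v, b) → b = c v := by
    intro v b hb
    by_contra hne
    have hb' : b = !(c v) := by cases b <;> cases hcv : c v <;> simp_all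
    have h2 := Relation.ReflTransGen.trans (rtgT_symm (hc v)) hb
    rw [hb'] at h2
    exact noflip hbal h2
  refine ⟨c, fun e => ?_⟩
  have hstep : Step G e ((G.ends e).1, c (G.ends e).1)
      ((G.ends e).2, if G.sign e then c (G.ends e).1 else !(c (G.ends e).1)) :=
    ⟨Or.inl (Prod.mk.eta).symm, rfl⟩
  have h3 : Relation.ReflTransGen (T G) (v0, true)
      ((G.ends e).2, if G.sign e then c (G.ends e).1 else !(c (G.ends e).1)) :=
    (hc _).tail ⟨e, hstep⟩
  have h4 := huniq _ _ h3
  cases hs : G.sign e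
  · rw [hs] at h4
    rw [if_neg (by simp)] at h4
    rw [← h4]
    simp
  · rw [hs] at h4
    rw [if_pos rfl] at h4
    rw [h4]
    simp

end StmtAux2
namespace StmtAux3

open SignedGraph StmtAux StmtAux2

variable {V E : Type*} [Fintype V] [Fintype E] {G : SignedGraph V E}
variable {F : Type*} [Field F]

set_option linter.unusedSectionVars false

/-- The linear map sending a vertex weighting to the corresponding codeword. -/
noncomputable def LMap (G : SignedGraph V E) (F : Type*) [Field F] :
    (V → F) →ₗ[F] (E → F) where
  toFun f := fun e => f (G.ends e).1 + (if G.sign e then -1 else 1) * f (G.ends e).2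
  map_add' f g := by funext e; simp only [Pi.add_apply]; ring
  map_smul' a f := by funext e; simp only [Pi.smul_apply, smul_eq_mul, RingHom.id_apply]; ring

lemma LMap_single (v : V) :
    LMap G F (Pi.single v 1) = (fun e => G.incCol F e v) := by
  funext e
  simp only [LMap, LinearMap.coe_mk, AddHom.coe_mk, SignedGraph.incCol]
  rw [Pi.single_apply, Pi.single_apply]
  by_cases h1 : (G.ends e).1 = v <;> by_cases h2 : (G.ends e).2 = v <;>
    simp [h1, h2] <;> ring

lemma code_eq_range : G.code F = LinearMap.range (LMap G F) := by
  apply le_antisymm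
  · rw [SignedGraph.code, Submodule.span_le]
    rintro x ⟨v, rfl⟩
    exact ⟨Pi.single v 1, LMap_single v⟩
  · rintro x ⟨f, rfl⟩
    have hf : f = ∑ v, f v • (Pi.single v 1 : V → F) := by
      funext w
      rw [Finset.sum_apply]
      simp [Pi.single_apply]
    rw [hf, map_sum]
    apply Submodule.sum_mem
    intro v _
    rw [map_smul, LMap_single]
    exact Submodule.smul_mem _ _ (Submodule.subset_span ⟨v, rfl⟩)

/-- The switching sign function as field elements. -/
noncomputable def theta (c : V → Bool) : V → F := fun v => if c v then 1 else -1

lemma theta_sq (c : V → Bool) (v : V) : (theta c v : F) * theta c v = 1 := by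
  unfold theta; by_cases h : c v <;> simp [h]

lemma theta_ne_zero (c : V → Bool) (v : V) : (theta c v : F) ≠ 0 := by
  unfold theta; by_cases h : c v <;> simp [h]

/-- The key switching identity for codeword entries. -/
lemma LMap_apply_eq {c : V → Bool}
    (hc : ∀ e, ((c (G.ends e).1 = c (G.ends e).2) ↔ G.sign e = true)) (f : V → F) (e : E) :
    LMap G F f e = theta c (G.ends e).1 *
      ((theta c (G.ends e).1 * f (G.ends e).1) - (theta c (G.ends e).2 * f (G.ends e).2)) := by
  simp only [LMap, LinearMap.coe_mk, AddHom.coe_mk]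
  cases hs : G.sign e
  · -- negative edge : c values differ
    have h1 : c (G.ends e).1 ≠ c (G.ends e).2 := by
      intro h
      have h2 := (hc e).mp h
      rw [hs] at h2
      simp at h2
    unfold theta
    cases h2 : c (G.ends e).1 <;> cases h3 : c (G.ends e).2 <;> simp_all <;> ring
  · have h1 : c (G.ends e).1 = c (G.ends e).2 := (hc e).mpr hs
    unfold theta
    cases h2 : c (G.ends e).1 <;> cases h3 : c (G.ends e).2 <;> simp_all <;> ring

lemma LMap_ne_zero_iff {c : V → Bool}
    (hc : ∀ e, ((c (G.ends e).1 = c (G.ends e).2) ↔ G.sign e = true)) (f : V → F) (e : E) :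
    LMap G F f e ≠ 0 ↔
      theta c (G.ends e).1 * f (G.ends e).1 ≠ (theta c (G.ends e).2 * f (G.ends e).2 : F) := by
  rw [LMap_apply_eq hc]
  constructor
  · intro h hne
    rw [hne] at h
    simp at h
  · intro h
    exact mul_ne_zero (theta_ne_zero c _) (sub_ne_zero_of_ne h)

end StmtAux3
namespace StmtAux3

open SignedGraph StmtAux StmtAux2

variable {V E : Type*} [Fintype V] [Fintype E] {G : SignedGraph V E}
variable {F : Type*} [Field F]

set_option linter.unusedSectionVars false

lemma g_const_of_R {c : V → Bool} (f : V → F)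
    (hc : ∀ e, ((c (G.ends e).1 = c (G.ends e).2) ↔ G.sign e = true))
    {X : Set E} (hX : ∀ e ∈ X, LMap G F f e = 0) {u w : V} (h : R G X u w) :
    theta c u * f u = theta c w * f w := by
  induction h with
  | rel a b' hab =>
    obtain ⟨e, he, hends⟩ := hab
    have h0 := hX e he
    have h1 : theta c (G.ends e).1 * f (G.ends e).1 = (theta c (G.ends e).2 * f (G.ends e).2 : F) := by
      by_contra hne
      exact (LMap_ne_zero_iff hc f e).mpr hne h0
    rcases hends with h2 | h2 <;> rw [h2] at h1
    · exact h1
    · exact h1.symm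
  | refl a => rfl
  | symm a b' _ ih => exact ih.symm
  | trans a b' c' _ _ ih ih' => exact ih.trans ih'

lemma ker_LMap [Nonempty V] (hconn : G.Connected) {c : V → Bool}
    (hc : ∀ e, ((c (G.ends e).1 = c (G.ends e).2) ↔ G.sign e = true)) :
    LinearMap.ker (LMap G F) = Submodule.span F {(theta c : V → F)} := by
  ext f
  rw [LinearMap.mem_ker, Submodule.mem_span_singleton]
  constructor
  · intro hf
    set v0 := Classical.arbitrary V with hv0
    refine ⟨theta c v0 * f v0, ?_⟩
    funext w
    have hg : theta c v0 * f v0 = (theta c w * f w : F) :=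
      g_const_of_R f hc (X := Set.univ) (fun e _ => congrFun hf e) (hconn v0 w)
    have : (theta c w : F) * (theta c w * f w) = theta c w * (theta c v0 * f v0) := by
      rw [hg]
    rw [← mul_assoc, theta_sq, one_mul] at this
    rw [Pi.smul_apply, smul_eq_mul, this]
    ring
  · rintro ⟨t, rfl⟩
    funext e
    rw [Pi.zero_apply]
    rw [LMap_apply_eq hc]
    have h1 : (theta c (G.ends e).1 : F) * (t • (theta c : V → F)) (G.ends e).1 = t := by
      rw [Pi.smul_apply, smul_eq_mul]
      rw [show (theta c (G.ends e).1 : F) * (t * theta c (G.ends e).1) =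
        t * (theta c (G.ends e).1 * theta c (G.ends e).1) by ring, theta_sq, mul_one]
    have h2 : (theta c (G.ends e).2 : F) * (t • (theta c : V → F)) (G.ends e).2 = t := by
      rw [Pi.smul_apply, smul_eq_mul]
      rw [show (theta c (G.ends e).2 : F) * (t * theta c (G.ends e).2) =
        t * (theta c (G.ends e).2 * theta c (G.ends e).2) by ring, theta_sq, mul_one]
    rw [h1, h2, sub_self, mul_zero]

lemma finrank_code [Nonempty V] (hconn : G.Connected) {c : V → Bool}
    (hc : ∀ e, ((c (G.ends e).1 = c (G.ends e).2) ↔ G.sign e = true)) :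
    Module.finrank F (G.code F) = Fintype.card V - 1 := by
  rw [code_eq_range]
  have h1 := LinearMap.finrank_range_add_finrank_ker (LMap G F)
  rw [ker_LMap hconn hc] at h1
  have hθ : (theta c : V → F) ≠ 0 := by
    intro h
    exact theta_ne_zero c (Classical.arbitrary V) (congrFun h _)
  rw [finrank_span_singleton hθ] at h1
  have h2 : Module.finrank F (V → F) = Fintype.card V := Module.finrank_pi F
  omega

lemma exists_subcode {r : ℕ} (hle : r ≤ Module.finrank F (G.code F)) :
    ∃ D : Submodule F (E → F), D ≤ G.code F ∧ Module.finrank F D = r := by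
  classical
  have : FiniteDimensional F ↥(G.code F) := inferInstance
  set b := Module.finBasis F ↥(G.code F) with hb
  set w : Fin r → (E → F) := fun i => (b (Fin.castLE hle i) : E → F) with hw
  have li0 : LinearIndependent F (fun i : Fin r => b (Fin.castLE hle i)) :=
    b.linearIndependent.comp _ (Fin.castLE_injective hle)
  have li : LinearIndependent F w :=
    li0.map' (G.code F).subtype (Submodule.ker_subtype _)
  refine ⟨Submodule.span F (Set.range w), ?_, ?_⟩
  · rw [Submodule.span_le]
    rintro x ⟨i, rfl⟩
    exact (b (Fin.castLE hle i)).2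
  · rw [finrank_span_eq_card li, Fintype.card_fin]

end StmtAux3
namespace StmtAux3

open SignedGraph StmtAux StmtAux2

variable {V E : Type*} [Fintype V] [Fintype E] {G : SignedGraph V E}
variable {F : Type*} [Field F]

set_option linter.unusedSectionVars false
set_option maxHeartbeats 1000000

lemma chi_ne_iff {P Q : Prop} [Decidable P] [Decidable Q] :
    ((if P then (1:F) else 0) ≠ (if Q then 1 else 0)) ↔ ¬(P ↔ Q) := by
  by_cases hP : P <;> by_cases hQ : Q <;> simp [hP, hQ]

/-- Every bond is the support of a codeword. -/
lemma bond_to_codeword [Nonempty V] (hconn : G.Connected) {c : V → Bool}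
    (hc : ∀ e, ((c (G.ends e).1 = c (G.ends e).2) ↔ G.sign e = true))
    {B : Set E} (hB : IsBond G B) :
    ∃ f : V → F, ∀ e, (LMap G F f e ≠ 0 ↔ e ∈ B) := by
  classical
  have hone : G.numComponents Set.univ = 1 := numComponents_eq_one hconn
  have h2 : 1 < G.numComponents (Set.univ \ B) := hone ▸ hB.1
  have hsep : ∃ u w, ¬ R G (Set.univ \ B) u w := by
    by_contra h
    push_neg at h
    rw [numComponents_eq_one h] at h2
    exact lt_irrefl _ h2
  obtain ⟨u, w, hnR⟩ := hsep
  set S : Set V := G.comp (Set.univ \ B) u with hS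
  have hSclosed : ∀ e' ∈ Set.univ \ B, (((G.ends e').1 ∈ S) ↔ ((G.ends e').2 ∈ S)) := by
    intro e' he'
    constructor
    · intro h1; exact R.trans h1 (R.of_adj ⟨e', he', Or.inl rfl⟩)
    · intro h1; exact R.trans h1 (R.of_adj ⟨e', he', Or.inr rfl⟩)
  have hBcross : ∀ e' ∈ B, ¬(((G.ends e').1 ∈ S) ↔ ((G.ends e').2 ∈ S)) := by
    intro e' he' hiff
    have hss : B \ {e'} ⊂ B := (Set.ssubset_iff_of_subset Set.diff_subset).mpr
      ⟨e', he', by simp⟩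
    have hY := hB.2 (B \ {e'}) hss
    rw [hone] at hY
    have hall := R_of_numComponents_eq_one hY u w
    have hclosed : ∀ e'' ∈ Set.univ \ (B \ {e'}),
        (((G.ends e'').1 ∈ S) ↔ ((G.ends e'').2 ∈ S)) := by
      intro e'' he''
      by_cases hBe : e'' ∈ B
      · have : e'' = e' := by
          by_contra hne
          exact he''.2 ⟨hBe, hne⟩
        rw [this]; exact hiff
      · exact hSclosed e'' ⟨trivial, hBe⟩
    have := closed_under_R hclosed hall
    exact hnR (this.mp (mem_comp_self _ _))
  refine ⟨fun v => theta c v * (if v ∈ S then 1 else 0), fun e => ?_⟩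
  have hval : ∀ v, (theta c v : F) * (theta c v * (if v ∈ S then 1 else 0)) =
      (if v ∈ S then 1 else 0) := by
    intro v
    rw [← mul_assoc, theta_sq, one_mul]
  rw [LMap_ne_zero_iff hc, hval, hval, chi_ne_iff]
  constructor
  · intro h
    by_contra hBe
    exact h (hSclosed e ⟨trivial, hBe⟩)
  · exact hBcross e

/-- Through every support edge of a codeword there is a bond inside the support. -/
lemma codeword_to_bond [Nonempty V] (hconn : G.Connected) {c : V → Bool}
    (hc : ∀ e, ((c (G.ends e).1 = c (G.ends e).2) ↔ G.sign e = true))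
    (f : V → F) {e : E} (he : LMap G F f e ≠ 0) :
    ∃ B : Set E, IsBond G B ∧ e ∈ B ∧ B ⊆ {e' | LMap G F f e' ≠ 0} := by
  classical
  set X : Set E := Set.univ \ {e' | LMap G F f e' ≠ 0} with hX
  have hXzero : ∀ e' ∈ X, LMap G F f e' = 0 := fun e' he' => not_not.mp he'.2
  set A : Set V := G.comp X (G.ends e).1 with hA
  have haA : (G.ends e).1 ∈ A := mem_comp_self _ _
  have hbA : (G.ends e).2 ∉ A := by
    intro hb
    exact (LMap_ne_zero_iff hc f e).mp he (g_const_of_R f hc hXzero hb)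
  have hAclosedX : ∀ e' ∈ X, (((G.ends e').1 ∈ A) ↔ ((G.ends e').2 ∈ A)) := by
    intro e' he'
    constructor
    · intro h1; exact R.trans h1 (R.of_adj ⟨e', he', Or.inl rfl⟩)
    · intro h1; exact R.trans h1 (R.of_adj ⟨e', he', Or.inr rfl⟩)
  set dA : Set E := {e' | ¬(((G.ends e').1 ∈ A) ↔ ((G.ends e').2 ∈ A))} with hdA
  have hdAsupp : dA ⊆ {e' | LMap G F f e' ≠ 0} := by
    intro e' he'
    by_contra hns
    exact he' (hAclosedX e' ⟨trivial, hns⟩)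
  set X₂ : Set E := Set.univ \ dA with hX2
  have hXX2 : X ⊆ X₂ := fun e' he' => ⟨trivial, fun hd => hd (hAclosedX e' he')⟩
  have hAclosedX2 : ∀ e' ∈ X₂, (((G.ends e').1 ∈ A) ↔ ((G.ends e').2 ∈ A)) :=
    fun e' he' => not_not.mp he'.2
  set K : Set V := G.comp X₂ (G.ends e).2 with hK
  have hbK : (G.ends e).2 ∈ K := mem_comp_self _ _
  have hKclosedX2 : ∀ e' ∈ X₂, (((G.ends e').1 ∈ K) ↔ ((G.ends e').2 ∈ K)) := by
    intro e' he'
    constructor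
    · intro h1; exact R.trans h1 (R.of_adj ⟨e', he', Or.inl rfl⟩)
    · intro h1; exact R.trans h1 (R.of_adj ⟨e', he', Or.inr rfl⟩)
  have hKA : ∀ v ∈ K, v ∉ A := by
    intro v hv hvA
    have h1 : ((G.ends e).2 ∈ A) ↔ (v ∈ A) := closed_under_R hAclosedX2 hv
    exact hbA (h1.mpr hvA)
  set B : Set E := {e' | ((G.ends e').1 ∈ A ∧ (G.ends e').2 ∈ K) ∨
    ((G.ends e').1 ∈ K ∧ (G.ends e').2 ∈ A)} with hB
  have heB : e ∈ B := Or.inl ⟨haA, hbK⟩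
  have hBdA : B ⊆ dA := by
    rintro e' (⟨h1, h2⟩ | ⟨h1, h2⟩)
    · intro hiff; exact hKA _ h2 (hiff.mp h1)
    · intro hiff; exact hKA _ h1 (hiff.mpr h2)
  have hBsupp : B ⊆ {e' | LMap G F f e' ≠ 0} := fun e' he' => hdAsupp (hBdA he')
  have hKclosed : ∀ e' ∈ Set.univ \ B, (((G.ends e').1 ∈ K) ↔ ((G.ends e').2 ∈ K)) := by
    intro e' he'
    by_cases hX2e : e' ∈ X₂
    · exact hKclosedX2 e' hX2e
    · have hcross : ¬(((G.ends e').1 ∈ A) ↔ ((G.ends e').2 ∈ A)) := by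
        intro hnn
        exact hX2e ⟨trivial, fun hd => hd hnn⟩
      have hnB : e' ∉ B := he'.2
      constructor
      · intro h1
        have ha'A : (G.ends e').1 ∉ A := fun h => hKA _ h1 h
        have hb'A : (G.ends e').2 ∈ A := by
          by_contra hb
          exact hcross (iff_of_false ha'A hb)
        exact absurd (Or.inr ⟨h1, hb'A⟩ : e' ∈ B) hnB
      · intro h2
        have hb'A : (G.ends e').2 ∉ A := fun h => hKA _ h2 h
        have ha'A : (G.ends e').1 ∈ A := by
          by_contra hb
          exact hcross (iff_of_false hb hb'A)
        exact absurd (Or.inl ⟨ha'A, h2⟩ : e' ∈ B) hnB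
  have hanotK : (G.ends e).1 ∉ K := fun h => hKA _ h haA
  have hnR : ¬ R G (Set.univ \ B) (G.ends e).1 (G.ends e).2 := by
    intro h
    exact hanotK ((closed_under_R hKclosed h).mpr hbK)
  have hone : G.numComponents Set.univ = 1 := numComponents_eq_one hconn
  refine ⟨B, ⟨?_, ?_⟩, heB, hBsupp⟩
  · rw [hone]; exact one_lt_numComponents hnR
  · intro Y hY
    rw [hone]
    obtain ⟨e₀, he₀B, he₀Y⟩ := Set.exists_of_ssubset hY
    have hsubUY : X₂ ⊆ Set.univ \ Y := by
      intro e' he'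
      exact ⟨trivial, fun hYe => he'.2 (hBdA (hY.1 hYe))⟩
    have hAconn : ∀ v ∈ A, R G (Set.univ \ Y) (G.ends e).1 v :=
      fun v hv => R.mono (fun x hx => hsubUY (hXX2 hx)) hv
    have hKconn : ∀ v ∈ K, R G (Set.univ \ Y) (G.ends e).2 v :=
      fun v hv => R.mono hsubUY hv
    have hbridge : R G (Set.univ \ Y) (G.ends e).1 (G.ends e).2 := by
      have hadj : R G (Set.univ \ Y) (G.ends e₀).1 (G.ends e₀).2 :=
        R.of_adj ⟨e₀, ⟨trivial, he₀Y⟩, Or.inl rfl⟩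
      rcases (he₀B : e₀ ∈ B) with ⟨h1, h2⟩ | ⟨h1, h2⟩
      · exact ((hAconn _ h1).trans hadj).trans (hKconn _ h2).symm
      · exact ((hAconn _ h2).trans hadj.symm).trans (hKconn _ h1).symm
    have hAK : ∀ p ∈ A ∪ K, ∀ q ∈ A ∪ K, R G (Set.univ \ Y) p q := by
      have hto : ∀ z ∈ A ∪ K, R G (Set.univ \ Y) (G.ends e).1 z := by
        rintro z (hz | hz)
        · exact hAconn _ hz
        · exact hbridge.trans (hKconn _ hz)
      intro p hp q hq
      exact (hto p hp).symm.trans (hto q hq)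
    have hedge : ∀ e', R G (Set.univ \ Y) (G.ends e').1 (G.ends e').2 := by
      intro e'
      by_cases hYe : e' ∈ Y
      · rcases (hY.1 hYe : e' ∈ B) with ⟨h1, h2⟩ | ⟨h1, h2⟩
        · exact hAK _ (Or.inl h1) _ (Or.inr h2)
        · exact hAK _ (Or.inr h1) _ (Or.inl h2)
      · exact R.of_adj ⟨e', ⟨trivial, hYe⟩, Or.inl rfl⟩
    have hall : ∀ u v, R G (Set.univ \ Y) u v := by
      intro u v
      have h0 := hconn u v
      induction h0 with
      | rel a b' hab =>
        obtain ⟨e', -, hends⟩ := hab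
        rcases hends with h1 | h1
        · have h3 := hedge e'; rw [h1] at h3; exact h3
        · have h3 := hedge e'; rw [h1] at h3; exact h3.symm
      | refl a => exact R.refl a
      | symm a b' _ ih => exact ih.symm
      | trans a b' c' _ _ ih ih' => exact ih.trans ih'
    exact numComponents_eq_one hall

end StmtAux3
namespace StmtAux3

open SignedGraph StmtAux StmtAux2

variable {E : Type*} [Fintype E] {F : Type*} [Field F]

set_option linter.unusedSectionVars false
set_option maxHeartbeats 1000000
set_option synthInstance.maxHeartbeats 1000000

/-- Echelon-form generators for a finite-rank subspace of `E → F`. -/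
lemma echelon : ∀ (r : ℕ) (D : Submodule F (E → F)), Module.finrank F D = r →
    ∃ (x : Fin r → (E → F)) (ed : Fin r → E),
      (∀ i, x i ∈ D) ∧ ∀ i j, (x i (ed j) ≠ 0 ↔ i = j) := by
  intro r
  induction r with
  | zero =>
    intro D hD
    exact ⟨fun i => i.elim0, fun i => i.elim0, fun i => i.elim0, fun i => i.elim0⟩
  | succ r IH =>
    intro D hD
    have hpos : 0 < Module.finrank F D := by omega
    obtain ⟨y, hyD, hy0⟩ : ∃ y ∈ D, y ≠ (0 : E → F) := by
      have : Nontrivial D := Module.finrank_pos_iff.mp hpos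
      obtain ⟨⟨y, hy⟩, hne⟩ := exists_ne (0 : D)
      exact ⟨y, hy, fun h => hne (Subtype.ext h)⟩
    obtain ⟨e, hye⟩ : ∃ e, y e ≠ 0 := by
      by_contra h; push_neg at h; exact hy0 (funext h)
    set pr : (E → F) →ₗ[F] F := LinearMap.proj e with hpr
    set D' : Submodule F (E → F) := D ⊓ LinearMap.ker pr with hD'
    have hrank' : Module.finrank F D' = r := by
      set φ : D →ₗ[F] F := pr.comp D.subtype with hφ
      have hker : LinearMap.ker φ = Submodule.comap D.subtype D' := by
        ext z
        simp only [hφ, LinearMap.mem_ker, LinearMap.comp_apply, Submodule.mem_comap, hD',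
          Submodule.mem_inf, Submodule.coe_subtype]
        simp [z.2]
      have hrange : LinearMap.range φ = ⊤ := by
        rw [Submodule.eq_top_iff']
        intro a
        have h1 : φ ⟨y, hyD⟩ = y e := rfl
        have h2 : a = (a * (y e)⁻¹) • φ ⟨y, hyD⟩ := by
          rw [h1, smul_eq_mul, mul_assoc, inv_mul_cancel₀ hye, mul_one]
        rw [h2]
        exact Submodule.smul_mem _ _ (LinearMap.mem_range_self φ _)
      have h3 := LinearMap.finrank_range_add_finrank_ker φ
      rw [hrange, hker, finrank_top, Module.finrank_self] at h3
      have h4 : Module.finrank F (Submodule.comap D.subtype D') = Module.finrank F D' :=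
        (Submodule.comapSubtypeEquivOfLe (inf_le_left : D' ≤ D)).finrank_eq
      omega
    obtain ⟨x', ed', hmem', hiff'⟩ := IH D' hrank'
    have hx'D : ∀ j, x' j ∈ D := fun j => (hmem' j).1
    have hx'e : ∀ j, x' j e = 0 := fun j => (hmem' j).2
    set z : E → F := y - ∑ j, ((y (ed' j)) / (x' j (ed' j))) • x' j with hz
    have hzD : z ∈ D :=
      Submodule.sub_mem _ hyD (Submodule.sum_mem _ (fun j _ => Submodule.smul_mem _ _ (hx'D j)))
    have hze : z e = y e := by
      simp only [hz, Pi.sub_apply, Finset.sum_apply, Pi.smul_apply, smul_eq_mul]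
      rw [Finset.sum_congr rfl (fun j _ => by rw [hx'e j, mul_zero])]
      simp
    have hzed : ∀ j, z (ed' j) = 0 := by
      intro j
      simp only [hz, Pi.sub_apply, Finset.sum_apply, Pi.smul_apply, smul_eq_mul]
      have hterm : ∀ k ∈ Finset.univ, (y (ed' k) / (x' k (ed' k))) * x' k (ed' j) =
          if k = j then y (ed' j) else 0 := by
        intro k _
        by_cases hkj : k = j
        · subst hkj
          rw [if_pos rfl, div_mul_cancel₀]
          exact (hiff' k k).mpr rfl
        · rw [if_neg hkj]
          have : ¬ (x' k (ed' j) ≠ 0) := fun h => hkj ((hiff' k j).mp h)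
          rw [not_not] at this
          rw [this, mul_zero]
      rw [Finset.sum_congr rfl hterm, Finset.sum_ite_eq' Finset.univ j (fun _ => y (ed' j))]
      simp
    refine ⟨Fin.snoc x' z, Fin.snoc ed' e, ?_, ?_⟩
    · intro i
      refine Fin.lastCases ?_ ?_ i
      · rw [Fin.snoc_last]; exact hzD
      · intro k; rw [Fin.snoc_castSucc]; exact hx'D k
    · intro i j
      refine Fin.lastCases ?_ ?_ i <;> [skip; intro k] <;> refine Fin.lastCases ?_ ?_ j
      · rw [Fin.snoc_last, Fin.snoc_last]
        simp [hze, hye]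
      · intro l
        rw [Fin.snoc_last, Fin.snoc_castSucc]
        have h1 : ¬ ((Fin.last r : Fin (r+1)) = l.castSucc) :=
          fun h => absurd h.symm (Fin.castSucc_lt_last l).ne
        simp [hzed l, h1]
      · rw [Fin.snoc_castSucc, Fin.snoc_last]
        have h1 : ¬ (k.castSucc = (Fin.last r : Fin (r+1))) := (Fin.castSucc_lt_last k).ne
        simp [hx'e k, h1]
      · intro l
        rw [Fin.snoc_castSucc, Fin.snoc_castSucc]
        rw [hiff' k l]
        exact ⟨fun h => by rw [h], fun h => Fin.castSucc_inj.mp h⟩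

end StmtAux3
theorem stmt19 {V E : Type*} [Fintype V] [Fintype E] (G : SignedGraph V E)
    (F : Type*) [Field F] [Fintype F]
    (hconn : G.Connected) (hbal : G.Balanced)
    (r : ℕ) (hr : 1 ≤ r) (hrs : r ≤ Fintype.card V - 1) :
    GHW (G.code F) r =
      sInf {n | ∃ C : Fin r → Set E,
        (∀ i, IsBond G (C i)) ∧ NonRedundant C ∧ (⋃ i, C i).ncard = n} := by
  classical
  open StmtAux StmtAux2 StmtAux3 in
  haveI hNV : Nonempty V := by
    have h : 0 < Fintype.card V := by omega
    exact Fintype.card_pos_iff.mp h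
  haveI hNE : Nonempty E := by
    by_contra h
    rw [not_nonempty_iff] at h
    obtain ⟨u, w, huw⟩ := Fintype.exists_pair_of_one_lt_card
      (by omega : 1 < Fintype.card V)
    have heq : ∀ a b : V, Relation.EqvGen (G.adjIn Set.univ) a b → a = b := by
      intro a b h0
      induction h0 with
      | rel a b hab => exact (h.false hab.choose).elim
      | refl a => rfl
      | symm a b _ ih => exact ih.symm
      | trans a b c _ _ ih ih' => exact ih.trans ih'
    exact huw (heq u w (hconn u w))
  obtain ⟨c, hc⟩ := StmtAux2.exists_switch hconn hbal
  have hrank : Module.finrank F (G.code F) = Fintype.card V - 1 :=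
    StmtAux3.finrank_code hconn hc
  obtain ⟨D₁, hD₁le, hD₁r⟩ := StmtAux3.exists_subcode (G := G) (F := F) (r := r) (by omega)
  -- the two sInf sets
  have hLHSne : {n | ∃ D : Submodule F (E → F), D ≤ G.code F ∧ Module.finrank F ↥D = r ∧
      (codeSupport D).ncard = n}.Nonempty := ⟨_, D₁, hD₁le, hD₁r, rfl⟩
  -- lower-bound construction : from a subcode extract non-redundant bonds inside the support
  have lower : ∀ D : Submodule F (E → F), D ≤ G.code F → Module.finrank F ↥D = r →
      ∃ C : Fin r → Set E, (∀ i, IsBond G (C i)) ∧ NonRedundant C ∧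
        (⋃ i, C i) ⊆ codeSupport D := by
    intro D hDle hDr
    obtain ⟨x, ed, hxD, hx⟩ := StmtAux3.echelon r D hDr
    have hxcode : ∀ i, ∃ f, StmtAux3.LMap G F f = x i := by
      intro i
      have h1 := hDle (hxD i)
      rw [StmtAux3.code_eq_range] at h1
      exact h1
    choose fs hfs using hxcode
    have hBs : ∀ i, ∃ B : Set E, IsBond G B ∧ ed i ∈ B ∧ B ⊆ {e' | x i e' ≠ 0} := by
      intro i
      have hne : StmtAux3.LMap G F (fs i) (ed i) ≠ 0 := by
        rw [hfs i]; exact (hx i i).mpr rfl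
      obtain ⟨B, h1, h2, h3⟩ := StmtAux3.codeword_to_bond hconn hc (fs i) hne
      refine ⟨B, h1, h2, fun e' he' => ?_⟩
      have h4 := h3 he'
      rwa [hfs i] at h4
    choose C hCbond hCed hCsub using hBs
    refine ⟨C, hCbond, ?_, ?_⟩
    · intro j
      constructor
      · exact Set.iUnion_subset (fun i => Set.iUnion_subset (fun _ => Set.subset_iUnion C i))
      · intro hsub
        have h1 : ed j ∈ ⋃ i, C i := Set.mem_iUnion.mpr ⟨j, hCed j⟩
        have h2 := hsub h1
        rw [Set.mem_iUnion] at h2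
        obtain ⟨i, h3⟩ := h2
        rw [Set.mem_iUnion] at h3
        obtain ⟨hij, h4⟩ := h3
        exact hij ((hx i j).mp (hCsub i h4))
    · apply Set.iUnion_subset
      intro i e' he'
      exact ⟨x i, hxD i, hCsub i he'⟩
  obtain ⟨C₁, hC₁b, hC₁nr, hC₁sub⟩ := lower D₁ hD₁le hD₁r
  have hRHSne : {n | ∃ C : Fin r → Set E,
      (∀ i, IsBond G (C i)) ∧ NonRedundant C ∧ (⋃ i, C i).ncard = n}.Nonempty :=
    ⟨_, C₁, hC₁b, hC₁nr, rfl⟩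
  unfold GHW
  apply le_antisymm
  · -- upper bound: build a subcode from minimizing bonds
    obtain ⟨C₀, hC₀b, hC₀nr, hC₀card⟩ := Nat.sInf_mem hRHSne
    have hfs : ∀ i, ∃ f : V → F, ∀ e, (StmtAux3.LMap G F f e ≠ 0 ↔ e ∈ C₀ i) :=
      fun i => StmtAux3.bond_to_codeword hconn hc (hC₀b i)
    choose f hf using hfs
    set x : Fin r → (E → F) := fun i => StmtAux3.LMap G F (f i) with hxdef
    have hpriv : ∀ j, ∃ e, e ∈ C₀ j ∧ ∀ i, i ≠ j → e ∉ C₀ i := by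
      intro j
      obtain ⟨e, he1, he2⟩ := Set.exists_of_ssubset (hC₀nr j)
      rw [Set.mem_iUnion] at he1
      obtain ⟨k, hk⟩ := he1
      have hkj : k = j := by
        by_contra hne
        exact he2 (Set.mem_iUnion.mpr ⟨k, Set.mem_iUnion.mpr ⟨hne, hk⟩⟩)
      subst hkj
      exact ⟨e, hk, fun i hij hmem =>
        he2 (Set.mem_iUnion.mpr ⟨i, Set.mem_iUnion.mpr ⟨hij, hmem⟩⟩)⟩
    choose p hp1 hp2 using hpriv
    have hxej : ∀ i j, i ≠ j → x i (p j) = 0 := by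
      intro i j hij
      by_contra hxx
      exact hp2 j i hij ((hf i (p j)).mp hxx)
    have hxjj : ∀ j, x j (p j) ≠ 0 := fun j => (hf j (p j)).mpr (hp1 j)
    have hli : LinearIndependent F x := by
      rw [Fintype.linearIndependent_iff]
      intro g hg j
      have h1 := congrFun hg (p j)
      rw [Finset.sum_apply, Pi.zero_apply] at h1
      rw [Finset.sum_eq_single j
        (fun i _ hij => by rw [Pi.smul_apply, smul_eq_mul, hxej i j hij, mul_zero])
        (fun h => absurd (Finset.mem_univ j) h)] at h1
      rw [Pi.smul_apply, smul_eq_mul] at h1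
      rcases mul_eq_zero.mp h1 with h2 | h2
      · exact h2
      · exact absurd h2 (hxjj j)
    set D : Submodule F (E → F) := Submodule.span F (Set.range x) with hDdef
    have hDle : D ≤ G.code F := by
      rw [hDdef, Submodule.span_le]
      rintro _ ⟨i, rfl⟩
      rw [StmtAux3.code_eq_range]
      exact ⟨f i, rfl⟩
    have hDr : Module.finrank F ↥D = r := by
      rw [hDdef, finrank_span_eq_card hli, Fintype.card_fin]
    have hsupp : codeSupport D ⊆ ⋃ i, C₀ i := by
      rintro e ⟨v, hvD, hve⟩
      rw [hDdef, Submodule.mem_span_range_iff_exists_fun] at hvD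
      obtain ⟨g, hg⟩ := hvD
      by_contra hne
      rw [Set.mem_iUnion] at hne
      push_neg at hne
      apply hve
      rw [← hg, Finset.sum_apply]
      apply Finset.sum_eq_zero
      intro i _
      have hxi : x i e = 0 := by
        by_contra hxx
        exact hne i ((hf i e).mp hxx)
      rw [Pi.smul_apply, hxi, smul_zero]
    calc sInf {n | ∃ D : Submodule F (E → F), D ≤ G.code F ∧ Module.finrank F ↥D = r ∧
            (codeSupport D).ncard = n} ≤ (codeSupport D).ncard :=
          Nat.sInf_le ⟨D, hDle, hDr, rfl⟩
      _ ≤ (⋃ i, C₀ i).ncard := Set.ncard_le_ncard hsupp (Set.toFinite _)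
      _ = _ := hC₀card
  · obtain ⟨D₀, hD₀le, hD₀r, hD₀card⟩ := Nat.sInf_mem hLHSne
    obtain ⟨C₂, hb2, hnr2, hsub2⟩ := lower D₀ hD₀le hD₀r
    calc sInf {n | ∃ C : Fin r → Set E,
            (∀ i, IsBond G (C i)) ∧ NonRedundant C ∧ (⋃ i, C i).ncard = n}
          ≤ (⋃ i, C₂ i).ncard := Nat.sInf_le ⟨C₂, hb2, hnr2, rfl⟩
      _ ≤ (codeSupport D₀).ncard := Set.ncard_le_ncard hsub2 (Set.toFinite _)
      _ = _ := hD₀card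
end
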